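/- arXiv:1602.08790 — 6 statements merged into one kernel-verified Lean document; each statement's English description precedes it below -/
import Mathlib

section
/- Let $(T_1,\lambda_1),(T_2,\lambda_2),(X_1,\mu_1),(X_2,\mu_2)$ be $\sigma$-finite measure spaces, and let $k_j$ be nonnegative $(\mu_j\times\lambda_j)$-measurable kernels for $j=1,2$. Define the product operator $Kf(x_1,x_2)=\iint k_1(x_1,t_1)k_2(x_2,t_2)f(t_1,t_2)\,d(\lambda_1\times\lambda_2)$ and factor operators $K_jg(x)=\int k_j(x,t)g(t)\,d\lambda_j$. Suppose $\|K_j g\|_{L^{r_j}_{\mu_j}}\le C_j\|g\|_{L^{p_j}_{\lambda_j}}$ for all nonnegative measurable $g$, with $p_1,p_2,r_1,r_2>0$ and $r_1\ge 1$. Then for all nonnegative $(\lambda_1\times\lambda_2)$-measurable $f$, $\|Kf\|_{L^{(r_1,r_2)}_{\mu_1\times\mu_2}}\le C_1C_2\|f\|_{L^{(p_1,p_2)}_{\lambda_1\times\lambda_2}}$. -/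
open MeasureTheory ENNReal

/-!
By Tonelli, the inner integral of `K f` is `∫ k₂(x₂,t₂) (K₁ f(·,t₂))(x₁) dλ₂(t₂)`. Minkowski's
integral inequality (this is where `r₁ ≥ 1` enters) moves the `L^{r₁}(μ₁)` norm inside the
`t₂`-integral, where the bound for `K₁` applies to each slice `f(·,t₂)`. What remains is
`C₁ · K₂ g` with `g(t₂) = ‖f(·,t₂)‖_{p₁}`, and the bound for `K₂` finishes.

Minkowski's inequality is proved by duality: if `h ≤ G := ∫ F(·,t) dν` and `H := ∫ h^r < ∞`, then
Tonelli and Hölder give `H ≤ ∫ G h^{r-1} ≤ B H^{1-1/r}` with `B := ∫ ‖F(·,t)‖_r dν`, so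
`H^{1/r} ≤ B`; σ-finiteness provides such truncations `h` increasing to `G`.
-/

namespace ENNReal

theorem rpow_le_of_le_mul_rpow_one_sub {a b : ℝ≥0∞} {s : ℝ} (hs : 0 < s) (ha : a ≠ ∞)
    (h : a ≤ b * a ^ (1 - s)) : a ^ s ≤ b := by
  rcases eq_or_ne a 0 with rfl | ha0
  · simp [zero_rpow_of_pos hs]
  have hpos : a ^ (1 - s) ≠ 0 := (rpow_pos (pos_iff_ne_zero.2 ha0) ha).ne'
  have hfin : a ^ (1 - s) ≠ ∞ := rpow_ne_top_of_ne_zero ha0 ha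
  rwa [← ENNReal.mul_le_mul_iff_left hpos hfin, ← rpow_add _ _ ha0 ha, add_sub_cancel, rpow_one]

end ENNReal

namespace MeasureTheory

theorem lintegral_le_of_forall_le_lintegral_ne_top {X : Type*} [MeasurableSpace X]
    {μ : Measure X} [SigmaFinite μ] {G : X → ℝ≥0∞} (hG : Measurable G) {B : ℝ≥0∞}
    (h : ∀ g : X → ℝ≥0∞, Measurable g → g ≤ G → ∫⁻ x, g x ∂μ ≠ ∞ → ∫⁻ x, g x ∂μ ≤ B) :
    ∫⁻ x, G x ∂μ ≤ B := by
  set g : ℕ → X → ℝ≥0∞ := fun n => (spanningSets μ n).indicator fun x => min (G x) n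
  have hg_meas n : Measurable (g n) :=
    (hG.min measurable_const).indicator (measurableSet_spanningSets μ n)
  have hg_le n : g n ≤ G := Set.indicator_le fun x _ => min_le_left _ _
  have hg_mono : Monotone g := by
    intro m n hmn x
    calc g m x ≤ (spanningSets μ m).indicator (fun x => min (G x) n) x :=
          Set.indicator_le_indicator (f := fun x => min (G x) m) (by gcongr)
      _ ≤ g n x :=
          Set.indicator_le_indicator_of_subset (monotone_spanningSets μ hmn) (fun _ => zero_le) x
  have hg_fin n : ∫⁻ x, g n x ∂μ ≠ ∞ := by
    refine ne_top_of_le_ne_top ?_ (lintegral_mono fun x =>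
      Set.indicator_le_indicator (f := fun x => min (G x) n) (g := fun _ => (n : ℝ≥0∞))
        (min_le_right _ _))
    rw [lintegral_indicator_const (measurableSet_spanningSets μ n)]
    exact mul_ne_top (natCast_ne_top n) (measure_spanningSets_lt_top μ n).ne
  have hg_iSup x : ⨆ n, g n x = G x := by
    refine le_antisymm (iSup_le fun n => hg_le n x) ?_
    have hx := mem_spanningSetsIndex μ x
    calc G x = ⨆ m : ℕ, min (G x) m := by rw [← inf_iSup_eq, iSup_natCast, inf_top_eq]
      _ ≤ ⨆ n, g n x := iSup_mono' fun m => ⟨max m (spanningSetsIndex μ x), by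
          simp only [g]
          rw [Set.indicator_of_mem (monotone_spanningSets μ (le_max_right _ _) hx)]
          exact min_le_min_left _ (by exact_mod_cast le_max_left _ _)⟩
  calc ∫⁻ x, G x ∂μ = ∫⁻ x, ⨆ n, g n x ∂μ := by simp_rw [hg_iSup]
    _ = ⨆ n, ∫⁻ x, g n x ∂μ := lintegral_iSup hg_meas hg_mono
    _ ≤ B := iSup_le fun n => h _ (hg_meas n) (hg_le n) (hg_fin n)

end MeasureTheory

namespace ENNReal

variable {X T : Type*} [MeasurableSpace X] [MeasurableSpace T] {μ : Measure X} {ν : Measure T}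

theorem lintegral_Lp_const_mul {f : X → ℝ≥0∞} (hf : Measurable f) {r : ℝ} (hr : 0 < r) (c : ℝ≥0∞) :
    (∫⁻ x, (c * f x) ^ r ∂μ) ^ (1 / r) = c * (∫⁻ x, f x ^ r ∂μ) ^ (1 / r) := by
  simp_rw [mul_rpow_of_nonneg _ _ hr.le]
  rw [lintegral_const_mul _ (hf.pow_const r), mul_rpow_of_nonneg _ _ (by positivity),
    ← rpow_mul, mul_one_div_cancel hr.ne', rpow_one]

theorem lintegral_lintegral_mul_le_lintegral_Lp_mul_Lq [SFinite μ] [SFinite ν] {r q : ℝ}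
    (hrq : r.HolderConjugate q) {F : X → T → ℝ≥0∞} (hF : Measurable (Function.uncurry F))
    {φ : X → ℝ≥0∞} (hφ : Measurable φ) :
    ∫⁻ x, (∫⁻ t, F x t ∂ν) * φ x ∂μ
      ≤ (∫⁻ t, (∫⁻ x, F x t ^ r ∂μ) ^ (1 / r) ∂ν) * (∫⁻ x, φ x ^ q ∂μ) ^ (1 / q) := by
  calc ∫⁻ x, (∫⁻ t, F x t ∂ν) * φ x ∂μ = ∫⁻ t, ∫⁻ x, F x t * φ x ∂μ ∂ν := by
        rw [← lintegral_lintegral_swap (hF.mul (hφ.comp measurable_fst)).aemeasurable]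
        exact lintegral_congr fun x =>
          (lintegral_mul_const _ (hF.comp measurable_prodMk_left)).symm
    _ ≤ ∫⁻ t, (∫⁻ x, F x t ^ r ∂μ) ^ (1 / r) * (∫⁻ x, φ x ^ q ∂μ) ^ (1 / q) ∂ν :=
        lintegral_mono fun t => lintegral_mul_le_Lp_mul_Lq μ hrq
          (hF.comp measurable_prodMk_right).aemeasurable hφ.aemeasurable
    _ = _ := lintegral_mul_const _ ((hF.pow_const r).lintegral_prod_left'.pow_const _)

theorem lintegral_Lp_le_lintegral_Lp_of_le_lintegral [SFinite μ] [SFinite ν] {r : ℝ} (hr : 1 < r)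
    {F : X → T → ℝ≥0∞} (hF : Measurable (Function.uncurry F)) {h : X → ℝ≥0∞}
    (hh : Measurable h) (hhF : ∀ x, h x ≤ ∫⁻ t, F x t ∂ν) (hfin : ∫⁻ x, h x ^ r ∂μ ≠ ∞) :
    (∫⁻ x, h x ^ r ∂μ) ^ (1 / r) ≤ ∫⁻ t, (∫⁻ x, F x t ^ r ∂μ) ^ (1 / r) ∂ν := by
  have hrq := Real.HolderConjugate.conjExponent hr
  refine rpow_le_of_le_mul_rpow_one_sub (by positivity) hfin ?_
  calc ∫⁻ x, h x ^ r ∂μ = ∫⁻ x, h x * h x ^ (r - 1) ∂μ := by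
        congr with x
        conv_lhs => rw [← add_sub_cancel 1 r]
        rw [rpow_add_of_nonneg _ _ zero_le_one (by linarith), rpow_one]
    _ ≤ ∫⁻ x, (∫⁻ t, F x t ∂ν) * h x ^ (r - 1) ∂μ := by gcongr with x; exact hhF x
    _ ≤ _ := lintegral_lintegral_mul_le_lintegral_Lp_mul_Lq hrq hF (hh.pow_const _)
    _ = _ := by
      simp_rw [← rpow_mul, hrq.sub_one_mul_conj, one_div, hrq.one_sub_inv]

theorem lintegral_Lp_lintegral_le_lintegral_Lp [SigmaFinite μ] [SFinite ν] {r : ℝ} (hr : 1 ≤ r)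
    {F : X → T → ℝ≥0∞} (hF : Measurable (Function.uncurry F)) :
    (∫⁻ x, (∫⁻ t, F x t ∂ν) ^ r ∂μ) ^ (1 / r) ≤ ∫⁻ t, (∫⁻ x, F x t ^ r ∂μ) ^ (1 / r) ∂ν := by
  rcases hr.eq_or_lt with rfl | hr
  · simpa using (lintegral_lintegral_swap hF.aemeasurable).le
  have hr0 : 0 < r := by linarith
  rw [one_div, rpow_inv_le_iff hr0]
  refine lintegral_le_of_forall_le_lintegral_ne_top (hF.lintegral_prod_right'.pow_const r)
    fun g hg hgF hfin => ?_
  have hg_eq : g = fun x => (g x ^ r⁻¹) ^ r := by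
    ext x; rw [rpow_inv_rpow hr0.ne']
  have key := lintegral_Lp_le_lintegral_Lp_of_le_lintegral (μ := μ) hr hF (hg.pow_const r⁻¹)
    (fun x => (rpow_inv_le_iff hr0).2 (hgF x)) (by rwa [← hg_eq])
  rwa [← hg_eq, one_div, rpow_inv_le_iff hr0] at key

end ENNReal

namespace MeasureTheory

theorem lintegral_prod_mul_mul {T₁ T₂ : Type*} [MeasurableSpace T₁] [MeasurableSpace T₂]
    {ν₁ : Measure T₁} {ν₂ : Measure T₂} [SFinite ν₁] [SFinite ν₂] {a : T₁ → ℝ≥0∞}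
    {b : T₂ → ℝ≥0∞} {f : T₁ × T₂ → ℝ≥0∞} (ha : Measurable a) (hb : Measurable b)
    (hf : Measurable f) :
    ∫⁻ t, a t.1 * b t.2 * f t ∂ν₁.prod ν₂ = ∫⁻ t₂, b t₂ * ∫⁻ t₁, a t₁ * f (t₁, t₂) ∂ν₁ ∂ν₂ := by
  rw [lintegral_prod_symm' _ (by fun_prop)]
  refine lintegral_congr fun t₂ => ?_
  rw [← lintegral_const_mul _ (by fun_prop)]
  congr with t₁
  ring

theorem lintegral_Lp_lintegral_prod_le {T₁ T₂ X₁ : Type*} [MeasurableSpace T₁]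
    [MeasurableSpace T₂] [MeasurableSpace X₁] {ν₁ : Measure T₁} {ν₂ : Measure T₂}
    {μ₁ : Measure X₁} [SFinite ν₁] [SFinite ν₂] [SigmaFinite μ₁] {k : X₁ → T₁ → ℝ≥0∞}
    (hk : Measurable (Function.uncurry k)) {p r : ℝ} (hr : 1 ≤ r) {C : ℝ≥0∞}
    (hK : ∀ g : T₁ → ℝ≥0∞, Measurable g →
      (∫⁻ x, (∫⁻ t, k x t * g t ∂ν₁) ^ r ∂μ₁) ^ (1 / r) ≤ C * (∫⁻ t, g t ^ p ∂ν₁) ^ (1 / p))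
    {b : T₂ → ℝ≥0∞} (hb : Measurable b) {f : T₁ × T₂ → ℝ≥0∞} (hf : Measurable f) :
    (∫⁻ x₁, (∫⁻ t, k x₁ t.1 * b t.2 * f t ∂ν₁.prod ν₂) ^ r ∂μ₁) ^ (1 / r)
      ≤ C * ∫⁻ t₂, b t₂ * (∫⁻ t₁, f (t₁, t₂) ^ p ∂ν₁) ^ (1 / p) ∂ν₂ := by
  set F : X₁ → T₂ → ℝ≥0∞ := fun x₁ t₂ => ∫⁻ t₁, k x₁ t₁ * f (t₁, t₂) ∂ν₁
  have hF : Measurable (Function.uncurry F) :=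
    Measurable.lintegral_prod_right' (f := fun q : (X₁ × T₂) × T₁ => k q.1.1 q.2 * f (q.2, q.1.2))
      (by fun_prop)
  have hkx x₁ : Measurable (k x₁) := hk.comp measurable_prodMk_left
  have tonelli x₁ := lintegral_prod_mul_mul (ν₁ := ν₁) (ν₂ := ν₂) (hkx x₁) hb hf
  simp_rw [tonelli]
  calc _ ≤ ∫⁻ t₂, (∫⁻ x₁, (b t₂ * F x₁ t₂) ^ r ∂μ₁) ^ (1 / r) ∂ν₂ :=
        lintegral_Lp_lintegral_le_lintegral_Lp hr (by fun_prop)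
    _ = ∫⁻ t₂, b t₂ * (∫⁻ x₁, F x₁ t₂ ^ r ∂μ₁) ^ (1 / r) ∂ν₂ :=
        lintegral_congr fun t₂ =>
          lintegral_Lp_const_mul (hF.comp measurable_prodMk_right) (by linarith) _
    _ ≤ ∫⁻ t₂, b t₂ * (C * (∫⁻ t₁, f (t₁, t₂) ^ p ∂ν₁) ^ (1 / p)) ∂ν₂ := by
        gcongr with t₂; exact hK _ (hf.comp measurable_prodMk_right)
    _ = _ := by
        simp_rw [mul_left_comm (b _)]
        exact lintegral_const_mul _
          (hb.mul (((hf.comp measurable_swap).pow_const p).lintegral_prod_right'.pow_const _))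

end MeasureTheory

theorem product_operator_mixed_norm_general
    {T1 T2 X1 X2 : Type*} [MeasurableSpace T1] [MeasurableSpace T2]
    [MeasurableSpace X1] [MeasurableSpace X2]
    (lam1 : Measure T1) (lam2 : Measure T2) (mu1 : Measure X1) (mu2 : Measure X2)
    [SigmaFinite lam1] [SigmaFinite lam2] [SigmaFinite mu1]
    (k1 : X1 → T1 → ℝ≥0∞) (k2 : X2 → T2 → ℝ≥0∞)
    (hk1 : Measurable fun p : X1 × T1 => k1 p.1 p.2)
    (hk2 : Measurable fun p : X2 × T2 => k2 p.1 p.2)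
    (p1 p2 r1 r2 : ℝ) (C1 C2 : ℝ≥0∞)
    (hr2 : 0 < r2)
    (hr1' : 1 ≤ r1)
    (hK1 : ∀ g : T1 → ℝ≥0∞, Measurable g →
      (∫⁻ x, (∫⁻ t, k1 x t * g t ∂lam1) ^ r1 ∂mu1) ^ (1 / r1)
        ≤ C1 * (∫⁻ t, g t ^ p1 ∂lam1) ^ (1 / p1))
    (hK2 : ∀ g : T2 → ℝ≥0∞, Measurable g →
      (∫⁻ x, (∫⁻ t, k2 x t * g t ∂lam2) ^ r2 ∂mu2) ^ (1 / r2)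
        ≤ C2 * (∫⁻ t, g t ^ p2 ∂lam2) ^ (1 / p2))
    (f : T1 × T2 → ℝ≥0∞) (hf : Measurable f) :
    (∫⁻ x2, (∫⁻ x1,
        (∫⁻ t, k1 x1 t.1 * k2 x2 t.2 * f t ∂(lam1.prod lam2)) ^ r1 ∂mu1) ^ (r2 / r1)
      ∂mu2) ^ (1 / r2)
      ≤ C1 * C2 *
        (∫⁻ t2, (∫⁻ t1, f (t1, t2) ^ p1 ∂lam1) ^ (p2 / p1) ∂lam2) ^ (1 / p2) := by
  set g : T2 → ℝ≥0∞ := fun t2 => (∫⁻ t1, f (t1, t2) ^ p1 ∂lam1) ^ (1 / p1)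
  have hg : Measurable g :=
    ((hf.comp measurable_swap).pow_const p1).lintegral_prod_right'.pow_const _
  calc _ = (∫⁻ x2, ((∫⁻ x1, (∫⁻ t, k1 x1 t.1 * k2 x2 t.2 * f t ∂(lam1.prod lam2)) ^ r1 ∂mu1)
          ^ (1 / r1)) ^ r2 ∂mu2) ^ (1 / r2) := by simp_rw [← rpow_mul, one_div_mul_eq_div]
    _ ≤ (∫⁻ x2, (C1 * ∫⁻ t2, k2 x2 t2 * g t2 ∂lam2) ^ r2 ∂mu2) ^ (1 / r2) := by
        gcongr with x2
        exact lintegral_Lp_lintegral_prod_le hk1 hr1' hK1 (hk2.comp measurable_prodMk_left) hf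
    _ = C1 * (∫⁻ x2, (∫⁻ t2, k2 x2 t2 * g t2 ∂lam2) ^ r2 ∂mu2) ^ (1 / r2) :=
        lintegral_Lp_const_mul (hk2.mul (hg.comp measurable_snd)).lintegral_prod_right' hr2 C1
    _ ≤ C1 * (C2 * (∫⁻ t2, g t2 ^ p2 ∂lam2) ^ (1 / p2)) := by gcongr; exact hK2 g hg
    _ = _ := by simp_rw [g, ← rpow_mul, one_div_mul_eq_div, mul_assoc]

theorem product_operator_mixed_norm
    {T1 T2 X1 X2 : Type*} [MeasurableSpace T1] [MeasurableSpace T2]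
    [MeasurableSpace X1] [MeasurableSpace X2]
    (lam1 : Measure T1) (lam2 : Measure T2) (mu1 : Measure X1) (mu2 : Measure X2)
    [SigmaFinite lam1] [SigmaFinite lam2] [SigmaFinite mu1] [SigmaFinite mu2]
    (k1 : X1 → T1 → ℝ≥0∞) (k2 : X2 → T2 → ℝ≥0∞)
    (hk1 : Measurable fun p : X1 × T1 => k1 p.1 p.2)
    (hk2 : Measurable fun p : X2 × T2 => k2 p.1 p.2)
    (p1 p2 r1 r2 : ℝ) (C1 C2 : ℝ≥0∞)
    (hp1 : 0 < p1) (hp2 : 0 < p2) (hr1 : 0 < r1) (hr2 : 0 < r2)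
    (hr1' : 1 ≤ r1) (hC1 : C1 ≠ ∞) (hC2 : C2 ≠ ∞)
    (hK1 : ∀ g : T1 → ℝ≥0∞, Measurable g →
      (∫⁻ x, (∫⁻ t, k1 x t * g t ∂lam1) ^ r1 ∂mu1) ^ (1 / r1)
        ≤ C1 * (∫⁻ t, g t ^ p1 ∂lam1) ^ (1 / p1))
    (hK2 : ∀ g : T2 → ℝ≥0∞, Measurable g →
      (∫⁻ x, (∫⁻ t, k2 x t * g t ∂lam2) ^ r2 ∂mu2) ^ (1 / r2)
        ≤ C2 * (∫⁻ t, g t ^ p2 ∂lam2) ^ (1 / p2))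
    (f : T1 × T2 → ℝ≥0∞) (hf : Measurable f) :
    (∫⁻ x2, (∫⁻ x1,
        (∫⁻ t, k1 x1 t.1 * k2 x2 t.2 * f t ∂(lam1.prod lam2)) ^ r1 ∂mu1) ^ (r2 / r1)
      ∂mu2) ^ (1 / r2)
      ≤ C1 * C2 *
        (∫⁻ t2, (∫⁻ t1, f (t1, t2) ^ p1 ∂lam1) ^ (p2 / p1) ∂lam2) ^ (1 / p2) :=
  product_operator_mixed_norm_general lam1 lam2 mu1 mu2 k1 k2 hk1 hk2 p1 p2 r1 r2 C1 C2 hr2 hr1' hK1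
    hK2 f hf
end

section
/- With the setup of a product operator $K$ with kernels $k_1,k_2$ and factor operators $K_1,K_2$ satisfying $\|K_j g\|_{L^{r_j}_{\mu_j}}\le C_j\|g\|_{L^{p_j}_{\lambda_j}}$ for nonnegative $g$: if $r_1\ge 1$, $r_2\ge 1$, and $p_1\le p_2$, then for all nonnegative measurable $f$ on $T_1\times T_2$, $\|Kf\|_{L^{(r_1,r_2)}_{\mu_1\times\mu_2}}\le C_1C_2\|f\|_{L^{(p_2,p_1)}_{\lambda_2\times\lambda_1}}$, where the right-hand side is the permuted mixed norm integrating first in $t_2$ with exponent $p_2$ and then in $t_1$ with exponent $p_1$. -/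
/-!
Write `Kf(x₁, x₂) = ∫ k₂(x₂, t₂) (K₁ f(·, t₂))(x₁) dt₂`. For fixed `x₂`, Minkowski's integral
inequality in `L^{r₁}(μ₁)` (this needs `r₁ ≥ 1`) and the bound for `K₁` give
`‖Kf(·, x₂)‖_{r₁} ≤ C₁ (K₂ φ)(x₂)` with `φ(t₂) = ‖f(·, t₂)‖_{p₁}`; the bound for `K₂` then gives
`C₁ C₂ ‖φ‖_{p₂}`. Finally `‖φ‖_{p₂} ≤ ‖‖f(t₁, ·)‖_{p₂}‖_{p₁}` is Minkowski's inequality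
again, applied to `f ^ p₁` with exponent `p₂ / p₁ ≥ 1`.

Minkowski's integral inequality for `p > 1` is proved by duality: for a truncation `g` of
`G = ∫ F(·, y) dy` with `∫ g ^ p < ∞`, Hölder gives
`∫ g ^ p ≤ ∫ g ^ (p - 1) G ≤ (∫ g ^ p) ^ (1/q) R` with `R = ∫ ‖F(·, y)‖_p dy`, and dividing
out the finite factor yields `∫ g ^ p ≤ R ^ p`.
-/

open MeasureTheory ENNReal Function

theorem le_rpow_of_le_rpow_mul_of_holderConjugate {p q : ℝ} (hpq : p.HolderConjugate q)
    {A R : ℝ≥0∞} (hA : A ≠ ∞) (h : A ≤ A ^ (1 / q) * R) : A ≤ R ^ p := by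
  rcases eq_or_ne A 0 with rfl | hA0
  · exact zero_le
  have hsplit : A = A ^ (1 / q) * A ^ (1 / p) := by
    rw [← ENNReal.rpow_add _ _ hA0 hA, one_div, one_div, add_comm,
      hpq.inv_add_inv_eq_one, ENNReal.rpow_one]
  have hAq0 : A ^ (1 / q) ≠ 0 := (ENNReal.rpow_pos (pos_iff_ne_zero.2 hA0) hA).ne'
  have hAqtop : A ^ (1 / q) ≠ ∞ := ENNReal.rpow_ne_top_of_nonneg hpq.symm.one_div_nonneg hA
  have hAp : A ^ (1 / p) ≤ R := by
    rw [← ENNReal.mul_le_mul_iff_right hAq0 hAqtop, ← hsplit]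
    exact h
  rwa [one_div, ENNReal.rpow_inv_le_iff hpq.pos] at hAp

section

variable {α β γ : Type*} [MeasurableSpace α] [MeasurableSpace β] [MeasurableSpace γ]
  {μ : Measure α} {ν : Measure β} {ρ : Measure γ}

theorem lintegral_rpow_le_of_forall_lintegral_rpow_lt_top [SigmaFinite μ] {G : α → ℝ≥0∞}
    (hG : Measurable G) {p : ℝ} (hp : 0 < p) {B : ℝ≥0∞}
    (h : ∀ g : α → ℝ≥0∞, Measurable g → g ≤ G → ∫⁻ x, g x ^ p ∂μ < ∞ → ∫⁻ x, g x ^ p ∂μ ≤ B) :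
    ∫⁻ x, G x ^ p ∂μ ≤ B := by
  obtain ⟨u, hu_pos, hu, hu_int⟩ := exists_pos_lintegral_lt_of_sigmaFinite μ one_ne_zero
  -- `w ^ p` has finite integral and `w > 0`, so the truncations `min G (n * w)` exhaust `G`.
  set w : α → ℝ≥0∞ := fun x => (u x : ℝ≥0∞) ^ (1 / p)
  set g : ℕ → α → ℝ≥0∞ := fun n x => min (G x) (n * w x)
  have hw : Measurable w := hu.coe_nnreal_ennreal.pow_const _
  have hg : ∀ n, Measurable (g n) := fun n => hG.min (measurable_const.mul hw)
  have hg_mono : Monotone g := fun n m hnm x =>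
    min_le_min le_rfl (mul_le_mul_left (Nat.cast_le.2 hnm) _)
  have hg_sup : ∀ x, ⨆ n, g n x = G x := by
    intro x
    have hw0 : w x ≠ 0 := (ENNReal.rpow_pos (by simpa using hu_pos x) coe_ne_top).ne'
    rw [← inf_iSup_eq, ← ENNReal.iSup_mul, ENNReal.iSup_natCast, top_mul hw0]
    exact min_top_right _
  have hg_int : ∀ n, ∫⁻ x, g n x ^ p ∂μ < ∞ := by
    intro n
    calc ∫⁻ x, g n x ^ p ∂μ ≤ ∫⁻ x, (n : ℝ≥0∞) ^ p * u x ∂μ := by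
          refine lintegral_mono fun x => ?_
          calc g n x ^ p ≤ (n * w x) ^ p := ENNReal.rpow_le_rpow (min_le_right _ _) hp.le
            _ = (n : ℝ≥0∞) ^ p * u x := by
              rw [ENNReal.mul_rpow_of_nonneg _ _ hp.le, ← ENNReal.rpow_mul,
                one_div_mul_cancel hp.ne', ENNReal.rpow_one]
      _ = (n : ℝ≥0∞) ^ p * ∫⁻ x, u x ∂μ := lintegral_const_mul _ hu.coe_nnreal_ennreal
      _ < ∞ := mul_lt_top (rpow_lt_top_of_nonneg hp.le (natCast_ne_top n)) (hu_int.trans one_lt_top)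
  have hG_pow : ∀ x, G x ^ p = ⨆ n, g n x ^ p := by
    intro x
    rw [← hg_sup x]
    exact Monotone.map_iSup_of_continuousAt (ENNReal.continuous_rpow_const.continuousAt)
      (fun a b hab => ENNReal.rpow_le_rpow hab hp.le) (ENNReal.zero_rpow_of_pos hp)
  calc ∫⁻ x, G x ^ p ∂μ = ⨆ n, ∫⁻ x, g n x ^ p ∂μ := by
        simp_rw [hG_pow]
        exact lintegral_iSup (fun n => (hg n).pow_const p)
          (fun n m hnm x => ENNReal.rpow_le_rpow (hg_mono hnm x) hp.le)
    _ ≤ B := iSup_le fun n => h (g n) (hg n) (fun x => min_le_left _ _) (hg_int n)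

theorem measurable_eLpNorm'_left [SFinite μ] {F : α → β → ℝ≥0∞} (hF : Measurable (uncurry F))
    (p : ℝ) : Measurable fun y => eLpNorm' (fun x => F x y) p μ :=
  ((hF.pow_const p).lintegral_prod_left').pow_const _

theorem lintegral_rpow_mul_lintegral_le [SFinite μ] [SFinite ν] {F : α → β → ℝ≥0∞}
    (hF : Measurable (uncurry F)) {p q : ℝ} (hpq : p.HolderConjugate q) {h : α → ℝ≥0∞}
    (hh : Measurable h) :
    ∫⁻ x, h x ^ (p - 1) * ∫⁻ y, F x y ∂ν ∂μ
      ≤ (∫⁻ x, h x ^ p ∂μ) ^ (1 / q) * ∫⁻ y, eLpNorm' (fun x => F x y) p μ ∂ν := by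
  have hholder : ∀ y, ∫⁻ x, h x ^ (p - 1) * F x y ∂μ
      ≤ (∫⁻ x, h x ^ p ∂μ) ^ (1 / q) * eLpNorm' (fun x => F x y) p μ := by
    intro y
    have hpow : ∀ x, (h x ^ (p - 1)) ^ q = h x ^ p := fun x => by
      rw [← ENNReal.rpow_mul, hpq.sub_one_mul_conj]
    have := ENNReal.lintegral_mul_le_Lp_mul_Lq μ hpq.symm (f := fun x => h x ^ (p - 1))
      (g := fun x => F x y) (hh.pow_const _).aemeasurable
      (hF.comp measurable_prodMk_right).aemeasurable
    simp only [Pi.mul_apply, hpow] at this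
    exact this
  calc ∫⁻ x, h x ^ (p - 1) * ∫⁻ y, F x y ∂ν ∂μ
        = ∫⁻ x, ∫⁻ y, h x ^ (p - 1) * F x y ∂ν ∂μ :=
          lintegral_congr fun x => (lintegral_const_mul _ (hF.comp measurable_prodMk_left)).symm
    _ = ∫⁻ y, ∫⁻ x, h x ^ (p - 1) * F x y ∂μ ∂ν :=
          lintegral_lintegral_swap (((hh.pow_const _).comp measurable_fst).mul hF).aemeasurable
    _ ≤ ∫⁻ y, (∫⁻ x, h x ^ p ∂μ) ^ (1 / q) * eLpNorm' (fun x => F x y) p μ ∂ν :=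
          lintegral_mono hholder
    _ = _ := lintegral_const_mul _ (measurable_eLpNorm'_left hF p)

theorem eLpNorm'_lintegral_le [SigmaFinite μ] [SFinite ν] {F : α → β → ℝ≥0∞}
    (hF : Measurable (uncurry F)) {p : ℝ} (hp : 1 ≤ p) :
    eLpNorm' (fun x => ∫⁻ y, F x y ∂ν) p μ ≤ ∫⁻ y, eLpNorm' (fun x => F x y) p μ ∂ν := by
  rcases hp.eq_or_lt with rfl | hp
  · simpa [eLpNorm'] using (lintegral_lintegral_swap hF.aemeasurable).le
  have hpq := Real.HolderConjugate.conjExponent hp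
  have hp0 : 0 < p := zero_lt_one.trans hp
  rw [eLpNorm', one_div, ENNReal.rpow_inv_le_iff hp0]
  simp only [enorm_eq_self]
  refine lintegral_rpow_le_of_forall_lintegral_rpow_lt_top hF.lintegral_prod_right' hp0
    fun g hg hgG hg_int => le_rpow_of_le_rpow_mul_of_holderConjugate hpq hg_int.ne ?_
  calc ∫⁻ x, g x ^ p ∂μ ≤ ∫⁻ x, g x ^ (p - 1) * ∫⁻ y, F x y ∂ν ∂μ := by
        refine lintegral_mono fun x => ?_
        calc g x ^ p = g x ^ (p - 1) * g x := by
              conv_lhs => rw [← sub_add_cancel p 1]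
              rw [ENNReal.rpow_add_of_nonneg _ _ (sub_nonneg.2 hp.le) zero_le_one,
                ENNReal.rpow_one]
          _ ≤ g x ^ (p - 1) * ∫⁻ y, F x y ∂ν := mul_le_mul_right (hgG x) _
    _ ≤ _ := lintegral_rpow_mul_lintegral_le hF hpq hg

theorem lintegral_prod_mul_mul_eq [SFinite μ] [SFinite ν] {a : α → ℝ≥0∞} {b : β → ℝ≥0∞}
    {f : α × β → ℝ≥0∞} (ha : Measurable a) (hb : Measurable b) (hf : Measurable f) :
    ∫⁻ z, a z.1 * b z.2 * f z ∂(μ.prod ν) = ∫⁻ y, ∫⁻ x, a x * (b y * f (x, y)) ∂μ ∂ν := by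
  rw [lintegral_prod_symm (fun z => a z.1 * b z.2 * f z)
    (((ha.comp measurable_fst).mul (hb.comp measurable_snd)).mul hf).aemeasurable]
  simp only [mul_assoc]

theorem eLpNorm'_const_mul_le {g : α → ℝ≥0∞} (hg : AEMeasurable g μ) (c : ℝ≥0∞) {p : ℝ}
    (hp : 0 < p) : eLpNorm' (fun x => c * g x) p μ ≤ c * eLpNorm' g p μ :=
  eLpNorm'_le_mul_eLpNorm'_of_ae_le_mul hg.aestronglyMeasurable
    (ae_of_all _ fun x => by simp only [enorm_eq_self, le_rfl]) hp

theorem eLpNorm'_rpow_div (g : α → ℝ≥0∞) {p : ℝ} (hp : 0 < p) (q : ℝ) :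
    eLpNorm' (fun x => g x ^ p) (q / p) μ = eLpNorm' g q μ ^ p := by
  simpa [div_mul_cancel₀ q hp.ne'] using eLpNorm'_enorm_rpow (μ := μ) g (q / p) p hp

theorem eLpNorm'_rpow_self (g : α → ℝ≥0∞) {p : ℝ} (hp : 0 < p) :
    eLpNorm' g p μ ^ p = ∫⁻ x, g x ^ p ∂μ := by
  simpa using (lintegral_rpow_enorm_eq_rpow_eLpNorm' (μ := μ) (f := g) hp).symm

theorem eLpNorm'_eLpNorm' (F : α → β → ℝ≥0∞) (p q : ℝ) :
    eLpNorm' (fun y => eLpNorm' (fun x => F x y) p μ) q ν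
      = (∫⁻ y, (∫⁻ x, F x y ^ p ∂μ) ^ (q / p) ∂ν) ^ (1 / q) := by
  simp only [eLpNorm', enorm_eq_self, ← ENNReal.rpow_mul, one_div_mul_eq_div]

theorem eLpNorm'_eLpNorm'_swap_le [SFinite μ] [SigmaFinite ν] {f : α → β → ℝ≥0∞}
    (hf : Measurable (uncurry f)) {p q : ℝ} (hp : 0 < p) (hpq : p ≤ q) :
    eLpNorm' (fun y => eLpNorm' (fun x => f x y) p μ) q ν
      ≤ eLpNorm' (fun x => eLpNorm' (fun y => f x y) q ν) p μ := by
  rw [← ENNReal.rpow_le_rpow_iff hp]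
  calc eLpNorm' (fun y => eLpNorm' (fun x => f x y) p μ) q ν ^ p
      = eLpNorm' (fun y => ∫⁻ x, f x y ^ p ∂μ) (q / p) ν := by
        rw [← eLpNorm'_rpow_div _ hp]
        simp only [eLpNorm'_rpow_self _ hp]
    _ ≤ ∫⁻ x, eLpNorm' (fun y => f x y ^ p) (q / p) ν ∂μ :=
        eLpNorm'_lintegral_le (F := fun y x => f x y ^ p) ((hf.comp measurable_swap).pow_const p)
          ((one_le_div hp).2 hpq)
    _ = eLpNorm' (fun x => eLpNorm' (fun y => f x y) q ν) p μ ^ p := by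
        simp only [eLpNorm'_rpow_div _ hp, eLpNorm'_rpow_self _ hp]

theorem eLpNorm'_lintegral_lintegral_kernel_le [SigmaFinite μ] [SFinite ν] [SFinite ρ]
    {k : α → β → ℝ≥0∞} (hk : Measurable (uncurry k)) {p r : ℝ} (hr : 1 ≤ r) {C : ℝ≥0∞}
    (hK : ∀ g : β → ℝ≥0∞, Measurable g →
      eLpNorm' (fun x => ∫⁻ t, k x t * g t ∂ν) r μ ≤ C * eLpNorm' g p ν)
    {F : β → γ → ℝ≥0∞} (hF : Measurable (uncurry F)) :
    eLpNorm' (fun x => ∫⁻ s, ∫⁻ t, k x t * F t s ∂ν ∂ρ) r μ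
      ≤ C * ∫⁻ s, eLpNorm' (fun t => F t s) p ν ∂ρ := by
  have hKF : Measurable (uncurry fun x s => ∫⁻ t, k x t * F t s ∂ν) :=
    Measurable.lintegral_prod_right' (f := fun z : (α × γ) × β => k z.1.1 z.2 * F z.2 z.1.2)
      ((hk.comp (measurable_fst.fst.prodMk measurable_snd)).mul
        (hF.comp (measurable_snd.prodMk measurable_fst.snd)))
  calc eLpNorm' (fun x => ∫⁻ s, ∫⁻ t, k x t * F t s ∂ν ∂ρ) r μ
      ≤ ∫⁻ s, eLpNorm' (fun x => ∫⁻ t, k x t * F t s ∂ν) r μ ∂ρ := eLpNorm'_lintegral_le hKF hr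
    _ ≤ ∫⁻ s, C * eLpNorm' (fun t => F t s) p ν ∂ρ :=
        lintegral_mono fun s => hK _ (hF.comp measurable_prodMk_right)
    _ = C * ∫⁻ s, eLpNorm' (fun t => F t s) p ν ∂ρ :=
        lintegral_const_mul _ (measurable_eLpNorm'_left hF p)

end

theorem product_operator_permuted_case_p1_le_p2_general
    {T1 T2 X1 X2 : Type*} [MeasurableSpace T1] [MeasurableSpace T2]
    [MeasurableSpace X1] [MeasurableSpace X2]
    (lam1 : Measure T1) (lam2 : Measure T2) (mu1 : Measure X1) (mu2 : Measure X2)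
    [SigmaFinite lam1] [SigmaFinite lam2] [SigmaFinite mu1]
    (k1 : X1 → T1 → ℝ≥0∞) (k2 : X2 → T2 → ℝ≥0∞)
    (hk1 : Measurable fun p : X1 × T1 => k1 p.1 p.2)
    (hk2 : Measurable fun p : X2 × T2 => k2 p.1 p.2)
    (p1 p2 r1 r2 : ℝ) (C1 C2 : ℝ≥0∞)
    (hp1 : 0 < p1)
    (hr1' : 1 ≤ r1) (hr2' : 1 ≤ r2) (hpp : p1 ≤ p2)
    (hK1 : ∀ g : T1 → ℝ≥0∞, Measurable g →
      (∫⁻ x, (∫⁻ t, k1 x t * g t ∂lam1) ^ r1 ∂mu1) ^ (1 / r1)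
        ≤ C1 * (∫⁻ t, g t ^ p1 ∂lam1) ^ (1 / p1))
    (hK2 : ∀ g : T2 → ℝ≥0∞, Measurable g →
      (∫⁻ x, (∫⁻ t, k2 x t * g t ∂lam2) ^ r2 ∂mu2) ^ (1 / r2)
        ≤ C2 * (∫⁻ t, g t ^ p2 ∂lam2) ^ (1 / p2))
    (f : T1 × T2 → ℝ≥0∞) (hf : Measurable f) :
    (∫⁻ x2, (∫⁻ x1,
        (∫⁻ t, k1 x1 t.1 * k2 x2 t.2 * f t ∂(lam1.prod lam2)) ^ r1 ∂mu1) ^ (r2 / r1)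
      ∂mu2) ^ (1 / r2)
      ≤ C1 * C2 *
        (∫⁻ t1, (∫⁻ t2, f (t1, t2) ^ p2 ∂lam2) ^ (p1 / p2) ∂lam1) ^ (1 / p1) := by
  set φ : T2 → ℝ≥0∞ := fun t2 => eLpNorm' (fun t1 => f (t1, t2)) p1 lam1
  have hφ : Measurable φ := measurable_eLpNorm'_left (F := fun t1 t2 => f (t1, t2)) hf p1
  have hK2φ : Measurable fun x2 => ∫⁻ t2, k2 x2 t2 * φ t2 ∂lam2 :=
    (hk2.mul (hφ.comp measurable_snd)).lintegral_prod_right'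
  have hinner : ∀ x2, eLpNorm' (fun x1 => ∫⁻ t, k1 x1 t.1 * k2 x2 t.2 * f t ∂(lam1.prod lam2))
      r1 mu1 ≤ C1 * ∫⁻ t2, k2 x2 t2 * φ t2 ∂lam2 := fun x2 => by
    have hF : Measurable fun t : T1 × T2 => k2 x2 t.2 * f t :=
      (hk2.comp (measurable_const.prodMk measurable_snd)).mul hf
    have hKf := fun x1 => lintegral_prod_mul_mul_eq (μ := lam1) (ν := lam2) (a := k1 x1)
      (b := k2 x2) (hk1.comp measurable_prodMk_left) (hk2.comp measurable_prodMk_left) hf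
    simp only [hKf]
    calc _ ≤ C1 * ∫⁻ t2, eLpNorm' (fun t1 => k2 x2 t2 * f (t1, t2)) p1 lam1 ∂lam2 :=
          eLpNorm'_lintegral_lintegral_kernel_le hk1 hr1' hK1 hF
      _ ≤ C1 * ∫⁻ t2, k2 x2 t2 * φ t2 ∂lam2 := by
          gcongr with t2
          exact eLpNorm'_const_mul_le (hf.comp measurable_prodMk_right).aemeasurable _ hp1
  calc _ = eLpNorm' (fun x2 => eLpNorm' (fun x1 =>
        ∫⁻ t, k1 x1 t.1 * k2 x2 t.2 * f t ∂(lam1.prod lam2)) r1 mu1) r2 mu2 :=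
        (eLpNorm'_eLpNorm' _ r1 r2).symm
    _ ≤ eLpNorm' (fun x2 => C1 * ∫⁻ t2, k2 x2 t2 * φ t2 ∂lam2) r2 mu2 :=
        eLpNorm'_mono_enorm_ae (by positivity) (ae_of_all _ fun x2 => by
          simpa only [enorm_eq_self] using hinner x2)
    _ ≤ C1 * eLpNorm' (fun x2 => ∫⁻ t2, k2 x2 t2 * φ t2 ∂lam2) r2 mu2 :=
        eLpNorm'_const_mul_le hK2φ.aemeasurable _ (by positivity)
    _ ≤ C1 * (C2 * eLpNorm' φ p2 lam2) := by gcongr; exact hK2 φ hφ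
    _ ≤ C1 * (C2 * eLpNorm' (fun t1 => eLpNorm' (fun t2 => f (t1, t2)) p2 lam2) p1 lam1) := by
        gcongr; exact eLpNorm'_eLpNorm'_swap_le (f := fun t1 t2 => f (t1, t2)) hf hp1 hpp
    _ = _ := by rw [eLpNorm'_eLpNorm', mul_assoc]

theorem product_operator_permuted_case_p1_le_p2
    {T1 T2 X1 X2 : Type*} [MeasurableSpace T1] [MeasurableSpace T2]
    [MeasurableSpace X1] [MeasurableSpace X2]
    (lam1 : Measure T1) (lam2 : Measure T2) (mu1 : Measure X1) (mu2 : Measure X2)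
    [SigmaFinite lam1] [SigmaFinite lam2] [SigmaFinite mu1] [SigmaFinite mu2]
    (k1 : X1 → T1 → ℝ≥0∞) (k2 : X2 → T2 → ℝ≥0∞)
    (hk1 : Measurable fun p : X1 × T1 => k1 p.1 p.2)
    (hk2 : Measurable fun p : X2 × T2 => k2 p.1 p.2)
    (p1 p2 r1 r2 : ℝ) (C1 C2 : ℝ≥0∞)
    (hp1 : 0 < p1) (hp2 : 0 < p2) (hr1 : 0 < r1) (hr2 : 0 < r2)
    (hr1' : 1 ≤ r1) (hr2' : 1 ≤ r2) (hpp : p1 ≤ p2)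
    (hK1 : ∀ g : T1 → ℝ≥0∞, Measurable g →
      (∫⁻ x, (∫⁻ t, k1 x t * g t ∂lam1) ^ r1 ∂mu1) ^ (1 / r1)
        ≤ C1 * (∫⁻ t, g t ^ p1 ∂lam1) ^ (1 / p1))
    (hK2 : ∀ g : T2 → ℝ≥0∞, Measurable g →
      (∫⁻ x, (∫⁻ t, k2 x t * g t ∂lam2) ^ r2 ∂mu2) ^ (1 / r2)
        ≤ C2 * (∫⁻ t, g t ^ p2 ∂lam2) ^ (1 / p2))
    (f : T1 × T2 → ℝ≥0∞) (hf : Measurable f) :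
    (∫⁻ x2, (∫⁻ x1,
        (∫⁻ t, k1 x1 t.1 * k2 x2 t.2 * f t ∂(lam1.prod lam2)) ^ r1 ∂mu1) ^ (r2 / r1)
      ∂mu2) ^ (1 / r2)
      ≤ C1 * C2 *
        (∫⁻ t1, (∫⁻ t2, f (t1, t2) ^ p2 ∂lam2) ^ (p1 / p2) ∂lam1) ^ (1 / p1) :=
  product_operator_permuted_case_p1_le_p2_general lam1 lam2 mu1 mu2 k1 k2 hk1 hk2 p1 p2 r1 r2 C1 C2
    hp1 hr1' hr2' hpp hK1 hK2 f hf
end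

section
/- With the setup of a product operator $K$ with factor bounds $\|K_j g\|_{L^{r_j}}\le C_j\|g\|_{L^{p_j}}$: if $1\le r_1\le p_2$, then $\|Kf\|_{L^{(r_1,r_2)}_{\mu_1\times\mu_2}}\le C_1C_2\|f\|_{L^{(p_2,p_1)}_{\lambda_2\times\lambda_1}}$ for all nonnegative measurable $f$ on $T_1\times T_2$. -/
/-!
Put `H(x₁, t₂) = ∫ k₁(x₁, t₁) f(t₁, t₂) dλ₁`; by Tonelli, `Kf(x₁, x₂) = K₂(H(x₁, ·))(x₂)`.
Minkowski's integral inequality in `L^{r₁}(μ₁)` moves the `x₁`-norm inside `K₂`, so the bound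
for `K₂` leaves `‖‖H(·, t₂)‖_{L^{r₁}(μ₁)}‖_{L^{p₂}(λ₂)}`. As `r₁ ≤ p₂`, Minkowski with exponent
`p₂ / r₁` swaps the two norms; Minkowski in `L^{p₂}(λ₂)` then bounds `‖H(x₁, ·)‖_{p₂}` by
`K₁φ(x₁)` with `φ(t₁) = ‖f(t₁, ·)‖_{p₂}`, and the bound for `K₁` finishes.
-/

open MeasureTheory ENNReal Filter Topology Function

namespace ENNReal

theorem rpow_one_div_le_iff {x y : ℝ≥0∞} {z : ℝ} (hz : 0 < z) : x ^ (1 / z) ≤ y ↔ x ≤ y ^ z := by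
  rw [one_div, rpow_inv_le_iff hz]

theorem le_rpow_of_le_rpow_mul {a b : ℝ≥0∞} {p q : ℝ} (hpq : p.HolderConjugate q) (ha : a ≠ ∞)
    (h : a ≤ a ^ (1 / q) * b) : a ≤ b ^ p := by
  rcases eq_or_ne a 0 with rfl | ha0
  · exact zero_le
  have hsplit : a ^ (1 / q) * a ^ (1 / p) = a := by
    rw [← rpow_add _ _ ha0 ha, add_comm, hpq.one_div_add_one_div, one_div_one, rpow_one]
  have hq0 : a ^ (1 / q) ≠ 0 := (rpow_pos (pos_iff_ne_zero.2 ha0) ha).ne'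
  have hqtop : a ^ (1 / q) ≠ ∞ := rpow_ne_top_of_nonneg hpq.symm.one_div_nonneg ha
  have h' := hsplit.trans_le h
  rwa [ENNReal.mul_le_mul_iff_right hq0 hqtop, rpow_one_div_le_iff hpq.pos] at h'

end ENNReal

namespace MeasureTheory

theorem lintegral_le_of_forall_le_of_lintegral_ne_top {α : Type*} [MeasurableSpace α]
    {μ : Measure α} [SigmaFinite μ] {f : α → ℝ≥0∞} (hf : Measurable f) {C : ℝ≥0∞}
    (h : ∀ g : α → ℝ≥0∞, Measurable g → g ≤ f → ∫⁻ x, g x ∂μ ≠ ∞ → ∫⁻ x, g x ∂μ ≤ C) :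
    ∫⁻ x, f x ∂μ ≤ C := by
  set g : ℕ → α → ℝ≥0∞ := fun n => (spanningSets μ n).indicator fun x => min (f x) n
  have hg_meas n : Measurable (g n) :=
    (hf.min measurable_const).indicator (measurableSet_spanningSets μ n)
  have hg_mono x : Monotone fun n => g n x := fun m n hmn =>
    (Set.indicator_le_indicator_of_subset (monotone_spanningSets μ hmn) (fun _ => zero_le) x).trans
      (Set.indicator_le_indicator (min_le_min le_rfl (by exact_mod_cast hmn)))
  have hg_tendsto x : Tendsto (fun n => g n x) atTop (𝓝 (f x)) := by
    have hmin : Tendsto (fun n : ℕ => min (f x) n) atTop (𝓝 (f x)) := by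
      simpa using tendsto_const_nhds.min ENNReal.tendsto_nat_nhds_top
    refine hmin.congr' ?_
    filter_upwards [eventually_mem_spanningSets μ x] with n hn
    simp [g, hn]
  have hg_fin n : ∫⁻ x, g n x ∂μ ≠ ∞ := by
    refine ne_top_of_le_ne_top (b := n * μ (spanningSets μ n)) ?_ ?_
    · exact ENNReal.mul_ne_top (by simp) (measure_spanningSets_lt_top μ n).ne
    · rw [lintegral_indicator (measurableSet_spanningSets μ n), ← setLIntegral_const]
      exact lintegral_mono fun x => min_le_right _ _
  refine le_of_tendsto' (lintegral_tendsto_of_tendsto_of_monotone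
    (fun n => (hg_meas n).aemeasurable) (ae_of_all _ hg_mono) (ae_of_all _ hg_tendsto)) ?_
  exact fun n => h (g n) (hg_meas n)
    (fun x => Set.indicator_le (fun x _ => min_le_left _ _) x) (hg_fin n)

section Minkowski

variable {α β : Type*} [MeasurableSpace α] [MeasurableSpace β] {μ : Measure α} {ν : Measure β}
  {f : α → β → ℝ≥0∞}

/-- Hölder against `g ^ (1 / q)` gives `∫ g ≤ (∫ g) ^ (1 / q) * B`, which can be solved for `∫ g`
only because `∫ g` is finite. -/
theorem lintegral_le_rpow_of_le_lintegral_rpow [SFinite μ] [SFinite ν] {p q : ℝ}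
    (hpq : p.HolderConjugate q) (hf : Measurable (uncurry f)) {g : α → ℝ≥0∞}
    (hg : Measurable g) (hgf : ∀ x, g x ≤ (∫⁻ y, f x y ∂ν) ^ p) (hg_fin : ∫⁻ x, g x ∂μ ≠ ∞) :
    ∫⁻ x, g x ∂μ ≤ (∫⁻ y, (∫⁻ x, f x y ^ p ∂μ) ^ (1 / p) ∂ν) ^ p := by
  refine ENNReal.le_rpow_of_le_rpow_mul hpq hg_fin ?_
  have hgq : Measurable fun x => g x ^ (1 / q) := hg.pow_const _
  have hg_split x : g x = g x ^ (1 / q) * g x ^ (1 / p) := by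
    rw [← ENNReal.rpow_add_of_nonneg _ _ hpq.symm.one_div_nonneg hpq.one_div_nonneg, add_comm,
      hpq.one_div_add_one_div, one_div_one, ENNReal.rpow_one]
  have hholder y : ∫⁻ x, g x ^ (1 / q) * f x y ∂μ
      ≤ (∫⁻ x, g x ∂μ) ^ (1 / q) * (∫⁻ x, f x y ^ p ∂μ) ^ (1 / p) := by
    have hgq_q x : (g x ^ (1 / q)) ^ q = g x := by
      rw [← ENNReal.rpow_mul, one_div_mul_cancel hpq.symm.ne_zero, ENNReal.rpow_one]
    have hfy : Measurable fun x => f x y := hf.comp (measurable_id.prodMk measurable_const)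
    simpa only [Pi.mul_apply, hgq_q] using
      lintegral_mul_le_Lp_mul_Lq μ hpq.symm hgq.aemeasurable hfy.aemeasurable
  calc ∫⁻ x, g x ∂μ
      ≤ ∫⁻ x, g x ^ (1 / q) * ∫⁻ y, f x y ∂ν ∂μ := by
        refine lintegral_mono fun x => (hg_split x).trans_le ?_
        exact mul_le_mul_right ((ENNReal.rpow_one_div_le_iff hpq.pos).2 (hgf x)) _
    _ = ∫⁻ y, ∫⁻ x, g x ^ (1 / q) * f x y ∂μ ∂ν := by
        rw [← lintegral_lintegral_swap ((hgq.comp measurable_fst).mul hf).aemeasurable]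
        exact lintegral_congr fun x =>
          (lintegral_const_mul _ (hf.comp (measurable_const.prodMk measurable_id))).symm
    _ ≤ ∫⁻ y, (∫⁻ x, g x ∂μ) ^ (1 / q) * (∫⁻ x, f x y ^ p ∂μ) ^ (1 / p) ∂ν :=
        lintegral_mono hholder
    _ = (∫⁻ x, g x ∂μ) ^ (1 / q) * ∫⁻ y, (∫⁻ x, f x y ^ p ∂μ) ^ (1 / p) ∂ν :=
        lintegral_const_mul _ (((hf.pow_const p).lintegral_prod_left').pow_const _)

theorem lintegral_Lp_lintegral_le [SigmaFinite μ] [SFinite ν] {p : ℝ} (hp : 1 ≤ p)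
    (hf : Measurable (uncurry f)) :
    (∫⁻ x, (∫⁻ y, f x y ∂ν) ^ p ∂μ) ^ (1 / p) ≤ ∫⁻ y, (∫⁻ x, f x y ^ p ∂μ) ^ (1 / p) ∂ν := by
  rcases hp.eq_or_lt with rfl | hp1
  · simpa using (lintegral_lintegral_swap hf.aemeasurable).le
  rw [ENNReal.rpow_one_div_le_iff (one_pos.trans hp1)]
  exact lintegral_le_of_forall_le_of_lintegral_ne_top (hf.lintegral_prod_right'.pow_const p)
    fun g hg hgf hg_fin => lintegral_le_rpow_of_le_lintegral_rpow
      (Real.HolderConjugate.conjExponent hp1) hf hg hgf hg_fin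

theorem lintegral_Lp_lintegral_mul_le [SigmaFinite μ] [SFinite ν] {p : ℝ} (hp : 1 ≤ p)
    {w : β → ℝ≥0∞} (hw : Measurable w) (hf : Measurable (uncurry f)) :
    (∫⁻ x, (∫⁻ y, w y * f x y ∂ν) ^ p ∂μ) ^ (1 / p)
      ≤ ∫⁻ y, w y * (∫⁻ x, f x y ^ p ∂μ) ^ (1 / p) ∂ν := by
  have hp0 : 0 < p := one_pos.trans_le hp
  refine (lintegral_Lp_lintegral_le hp ((hw.comp measurable_snd).mul hf)).trans_eq
    (lintegral_congr fun y => ?_)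
  have hfy : Measurable fun x => f x y := hf.comp (measurable_id.prodMk measurable_const)
  simp_rw [ENNReal.mul_rpow_of_nonneg _ _ hp0.le]
  rw [lintegral_const_mul _ (hfy.pow_const p), ENNReal.mul_rpow_of_nonneg _ _ (by positivity),
    one_div, ENNReal.rpow_rpow_inv hp0.ne']

theorem lintegral_mixed_Lp_swap_le [SFinite μ] [SigmaFinite ν] {r p : ℝ} (hr : 0 < r)
    (hrp : r ≤ p) (hf : Measurable (uncurry f)) :
    (∫⁻ y, (∫⁻ x, f x y ^ r ∂μ) ^ (p / r) ∂ν) ^ (1 / p)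
      ≤ (∫⁻ x, (∫⁻ y, f x y ^ p ∂ν) ^ (r / p) ∂μ) ^ (1 / r) := by
  have hmink := lintegral_Lp_lintegral_le (μ := ν) (ν := μ) ((one_le_div hr).2 hrp)
    (f := fun y x => f x y ^ r) ((hf.comp measurable_swap).pow_const r)
  have hexp : 1 / p = 1 / (p / r) * (1 / r) := by field_simp
  calc (∫⁻ y, (∫⁻ x, f x y ^ r ∂μ) ^ (p / r) ∂ν) ^ (1 / p)
      = ((∫⁻ y, (∫⁻ x, f x y ^ r ∂μ) ^ (p / r) ∂ν) ^ (1 / (p / r))) ^ (1 / r) := by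
        rw [← ENNReal.rpow_mul, ← hexp]
    _ ≤ (∫⁻ x, (∫⁻ y, (f x y ^ r) ^ (p / r) ∂ν) ^ (1 / (p / r)) ∂μ) ^ (1 / r) :=
        ENNReal.rpow_le_rpow hmink (one_div_nonneg.2 hr.le)
    _ = (∫⁻ x, (∫⁻ y, f x y ^ p ∂ν) ^ (r / p) ∂μ) ^ (1 / r) := by
        simp_rw [← ENNReal.rpow_mul, mul_div_cancel₀ p hr.ne', one_div_div]

end Minkowski

section ProductKernel

variable {X T1 T2 : Type*} [MeasurableSpace X] [MeasurableSpace T1] [MeasurableSpace T2]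
  {mu : Measure X} {lam1 : Measure T1} {lam2 : Measure T2} {k : X → T1 → ℝ≥0∞}
  {f : T1 × T2 → ℝ≥0∞}

theorem lintegral_prod_mul_mul_eq [SFinite lam1] [SFinite lam2] {a : T1 → ℝ≥0∞}
    {b : T2 → ℝ≥0∞} (ha : Measurable a) (hb : Measurable b) (hf : Measurable f) :
    ∫⁻ t, a t.1 * b t.2 * f t ∂(lam1.prod lam2)
      = ∫⁻ t2, b t2 * ∫⁻ t1, a t1 * f (t1, t2) ∂lam1 ∂lam2 := by
  have hmeas : Measurable fun t : T1 × T2 => a t.1 * b t.2 * f t :=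
    ((ha.comp measurable_fst).mul (hb.comp measurable_snd)).mul hf
  rw [lintegral_prod_symm _ hmeas.aemeasurable]
  refine lintegral_congr fun t2 => ?_
  have hft : Measurable fun t1 => a t1 * f (t1, t2) :=
    ha.mul (hf.comp (measurable_id.prodMk measurable_const))
  rw [← lintegral_const_mul _ hft]
  exact lintegral_congr fun t1 => by ring

theorem measurable_lintegral_kernel_mul [SFinite lam1] (hk : Measurable (uncurry k))
    (hf : Measurable f) : Measurable fun p : X × T2 => ∫⁻ t1, k p.1 t1 * f (t1, p.2) ∂lam1 :=
  Measurable.lintegral_prod_right' (f := fun q : (X × T2) × T1 => k q.1.1 q.2 * f (q.2, q.1.2))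
    ((hk.comp (measurable_fst.fst.prodMk measurable_snd)).mul
      (hf.comp (measurable_snd.prodMk measurable_fst.snd)))

theorem lintegral_Lp_lintegral_prod_le_s5 [SigmaFinite mu] [SFinite lam1] [SFinite lam2] {r : ℝ}
    (hr : 1 ≤ r) (hk : Measurable (uncurry k)) {b : T2 → ℝ≥0∞} (hb : Measurable b)
    (hf : Measurable f) :
    (∫⁻ x, (∫⁻ t, k x t.1 * b t.2 * f t ∂(lam1.prod lam2)) ^ r ∂mu) ^ (1 / r)
      ≤ ∫⁻ t2, b t2 * (∫⁻ x, (∫⁻ t1, k x t1 * f (t1, t2) ∂lam1) ^ r ∂mu) ^ (1 / r) ∂lam2 := by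
  have htonelli x := lintegral_prod_mul_mul_eq (lam1 := lam1) (lam2 := lam2)
    (hk.comp (measurable_const.prodMk measurable_id)) hb hf (a := k x)
  simp_rw [htonelli]
  exact lintegral_Lp_lintegral_mul_le hr hb (measurable_lintegral_kernel_mul hk hf)

theorem lintegral_mixed_Lp_kernel_le [SFinite mu] [SFinite lam1] [SigmaFinite lam2]
    {r p : ℝ} (hr : 0 < r) (hrp : r ≤ p) (hp : 1 ≤ p) (hk : Measurable (uncurry k))
    (hf : Measurable f) :
    (∫⁻ t2, ((∫⁻ x, (∫⁻ t1, k x t1 * f (t1, t2) ∂lam1) ^ r ∂mu) ^ (1 / r)) ^ p ∂lam2) ^ (1 / p)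
      ≤ (∫⁻ x, (∫⁻ t1, k x t1 * (∫⁻ t2, f (t1, t2) ^ p ∂lam2) ^ (1 / p) ∂lam1) ^ r ∂mu)
          ^ (1 / r) := by
  have hH := measurable_lintegral_kernel_mul (lam1 := lam1) hk hf
  have hf_swap : Measurable (uncurry fun t2 t1 => f (t1, t2)) := hf.comp measurable_swap
  calc (∫⁻ t2, ((∫⁻ x, (∫⁻ t1, k x t1 * f (t1, t2) ∂lam1) ^ r ∂mu) ^ (1 / r)) ^ p ∂lam2) ^ (1 / p)
      = (∫⁻ t2, (∫⁻ x, (∫⁻ t1, k x t1 * f (t1, t2) ∂lam1) ^ r ∂mu) ^ (p / r) ∂lam2)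
          ^ (1 / p) := by
        simp_rw [← ENNReal.rpow_mul, one_div_mul_eq_div]
    _ ≤ (∫⁻ x, (∫⁻ t2, (∫⁻ t1, k x t1 * f (t1, t2) ∂lam1) ^ p ∂lam2) ^ (r / p) ∂mu)
          ^ (1 / r) :=
        lintegral_mixed_Lp_swap_le hr hrp hH
    _ = (∫⁻ x, ((∫⁻ t2, (∫⁻ t1, k x t1 * f (t1, t2) ∂lam1) ^ p ∂lam2) ^ (1 / p)) ^ r ∂mu)
          ^ (1 / r) := by
        simp_rw [← ENNReal.rpow_mul, one_div_mul_eq_div]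
    _ ≤ _ := by
        gcongr with x
        exact lintegral_Lp_lintegral_mul_le hp (hk.comp (measurable_const.prodMk measurable_id))
          hf_swap

end ProductKernel

end MeasureTheory

theorem product_operator_permuted_case_r1_le_p2_general
    {T1 T2 X1 X2 : Type*} [MeasurableSpace T1] [MeasurableSpace T2]
    [MeasurableSpace X1] [MeasurableSpace X2]
    (lam1 : Measure T1) (lam2 : Measure T2) (mu1 : Measure X1) (mu2 : Measure X2)
    [SigmaFinite lam1] [SigmaFinite lam2] [SigmaFinite mu1]
    (k1 : X1 → T1 → ℝ≥0∞) (k2 : X2 → T2 → ℝ≥0∞)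
    (hk1 : Measurable fun p : X1 × T1 => k1 p.1 p.2)
    (hk2 : Measurable fun p : X2 × T2 => k2 p.1 p.2)
    (p1 p2 r1 r2 : ℝ) (C1 C2 : ℝ≥0∞)
    (hr2 : 0 < r2)
    (hr1' : 1 ≤ r1) (hrp : r1 ≤ p2)
    (hK1 : ∀ g : T1 → ℝ≥0∞, Measurable g →
      (∫⁻ x, (∫⁻ t, k1 x t * g t ∂lam1) ^ r1 ∂mu1) ^ (1 / r1)
        ≤ C1 * (∫⁻ t, g t ^ p1 ∂lam1) ^ (1 / p1))
    (hK2 : ∀ g : T2 → ℝ≥0∞, Measurable g →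
      (∫⁻ x, (∫⁻ t, k2 x t * g t ∂lam2) ^ r2 ∂mu2) ^ (1 / r2)
        ≤ C2 * (∫⁻ t, g t ^ p2 ∂lam2) ^ (1 / p2))
    (f : T1 × T2 → ℝ≥0∞) (hf : Measurable f) :
    (∫⁻ x2, (∫⁻ x1,
        (∫⁻ t, k1 x1 t.1 * k2 x2 t.2 * f t ∂(lam1.prod lam2)) ^ r1 ∂mu1) ^ (r2 / r1)
      ∂mu2) ^ (1 / r2)
      ≤ C1 * C2 *
        (∫⁻ t1, (∫⁻ t2, f (t1, t2) ^ p2 ∂lam2) ^ (p1 / p2) ∂lam1) ^ (1 / p1) := by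
  set ψ : T2 → ℝ≥0∞ := fun t2 =>
    (∫⁻ x1, (∫⁻ t1, k1 x1 t1 * f (t1, t2) ∂lam1) ^ r1 ∂mu1) ^ (1 / r1)
  set φ : T1 → ℝ≥0∞ := fun t1 => (∫⁻ t2, f (t1, t2) ^ p2 ∂lam2) ^ (1 / p2)
  have hψ : Measurable ψ :=
    (((measurable_lintegral_kernel_mul hk1 hf).pow_const r1).lintegral_prod_left').pow_const _
  have hφ : Measurable φ := ((hf.pow_const p2).lintegral_prod_right').pow_const _
  calc _ = (∫⁻ x2, ((∫⁻ x1, (∫⁻ t, k1 x1 t.1 * k2 x2 t.2 * f t ∂(lam1.prod lam2)) ^ r1 ∂mu1)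
          ^ (1 / r1)) ^ r2 ∂mu2) ^ (1 / r2) := by
        simp_rw [← ENNReal.rpow_mul, one_div_mul_eq_div]
    _ ≤ (∫⁻ x2, (∫⁻ t2, k2 x2 t2 * ψ t2 ∂lam2) ^ r2 ∂mu2) ^ (1 / r2) := by
        gcongr with x2
        exact lintegral_Lp_lintegral_prod_le_s5 hr1' hk1
          (hk2.comp (measurable_const.prodMk measurable_id)) hf
    _ ≤ C2 * (∫⁻ t2, ψ t2 ^ p2 ∂lam2) ^ (1 / p2) := hK2 ψ hψ
    _ ≤ C2 * (∫⁻ x1, (∫⁻ t1, k1 x1 t1 * φ t1 ∂lam1) ^ r1 ∂mu1) ^ (1 / r1) := by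
        gcongr
        exact lintegral_mixed_Lp_kernel_le (one_pos.trans_le hr1') hrp (hr1'.trans hrp) hk1 hf
    _ ≤ C2 * (C1 * (∫⁻ t1, φ t1 ^ p1 ∂lam1) ^ (1 / p1)) := by
        gcongr
        exact hK1 φ hφ
    _ = _ := by
        simp_rw [φ, ← ENNReal.rpow_mul, one_div_mul_eq_div]
        ring

theorem product_operator_permuted_case_r1_le_p2
    {T1 T2 X1 X2 : Type*} [MeasurableSpace T1] [MeasurableSpace T2]
    [MeasurableSpace X1] [MeasurableSpace X2]
    (lam1 : Measure T1) (lam2 : Measure T2) (mu1 : Measure X1) (mu2 : Measure X2)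
    [SigmaFinite lam1] [SigmaFinite lam2] [SigmaFinite mu1] [SigmaFinite mu2]
    (k1 : X1 → T1 → ℝ≥0∞) (k2 : X2 → T2 → ℝ≥0∞)
    (hk1 : Measurable fun p : X1 × T1 => k1 p.1 p.2)
    (hk2 : Measurable fun p : X2 × T2 => k2 p.1 p.2)
    (p1 p2 r1 r2 : ℝ) (C1 C2 : ℝ≥0∞)
    (hp1 : 0 < p1) (hp2 : 0 < p2) (hr1 : 0 < r1) (hr2 : 0 < r2)
    (hr1' : 1 ≤ r1) (hrp : r1 ≤ p2)
    (hK1 : ∀ g : T1 → ℝ≥0∞, Measurable g →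
      (∫⁻ x, (∫⁻ t, k1 x t * g t ∂lam1) ^ r1 ∂mu1) ^ (1 / r1)
        ≤ C1 * (∫⁻ t, g t ^ p1 ∂lam1) ^ (1 / p1))
    (hK2 : ∀ g : T2 → ℝ≥0∞, Measurable g →
      (∫⁻ x, (∫⁻ t, k2 x t * g t ∂lam2) ^ r2 ∂mu2) ^ (1 / r2)
        ≤ C2 * (∫⁻ t, g t ^ p2 ∂lam2) ^ (1 / p2))
    (f : T1 × T2 → ℝ≥0∞) (hf : Measurable f) :
    (∫⁻ x2, (∫⁻ x1,
        (∫⁻ t, k1 x1 t.1 * k2 x2 t.2 * f t ∂(lam1.prod lam2)) ^ r1 ∂mu1) ^ (r2 / r1)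
      ∂mu2) ^ (1 / r2)
      ≤ C1 * C2 *
        (∫⁻ t1, (∫⁻ t2, f (t1, t2) ^ p2 ∂lam2) ^ (p1 / p2) ∂lam1) ^ (1 / p1) :=
  product_operator_permuted_case_r1_le_p2_general lam1 lam2 mu1 mu2 k1 k2 hk1 hk2 p1 p2 r1 r2 C1 C2
    hr2 hr1' hrp hK1 hK2 f hf
end

section
/- With the setup of a product operator $K$ with factor bounds: if $r_1\ge 1$, $r_2\ge 1$, and $\min(p_1,r_1)\le\max(p_2,r_2)$, then $\|Kf\|_{L^{(r_1,r_2)}_{\mu_1\times\mu_2}}\le C_1C_2\|f\|_{L^{(p_2,p_1)}_{\lambda_2\times\lambda_1}}$ for all nonnegative measurable $f$ on $T_1\times T_2$. -/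
/-!
Everything rests on Minkowski's integral inequality
`‖∫ F(x, ·) dμ(x)‖_{L^p_ν} ≤ ∫ ‖F(x, ·)‖_{L^p_ν} dμ(x)` for `p ≥ 1`, proved by duality: Hölder
gives `∫ g^p ≤ R (∫ g^p)^{1/q}` for every `g ≤ ∫ F(x, ·) dμ(x)`, hence `∫ g^p ≤ R^p` whenever
`∫ g^p < ∞`, and σ-finiteness supplies enough such `g`.

Minkowski's inequality permutes a mixed norm, moving the larger exponent inside, and lets a factor
operator `K_j` act in the outer variable of a mixed norm whose inner exponent is at least `1`;
in the inner variable the factor bound applies pointwise. By Tonelli `K` is `K₁` applied to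
`K₂ f` or `K₂` applied to `K₁ f`. The hypothesis `min(p₁, r₁) ≤ max(p₂, r₂)` says that one of
`p₁ ≤ r₂`, `p₁ ≤ p₂`, `r₁ ≤ p₂`, `r₁ ≤ r₂` holds, and each of them is the permutation needed in one
chain of two factor bounds leading from `L^{(r₁,r₂)}` to `L^{(p₂,p₁)}`.
-/

open MeasureTheory ENNReal Function

theorem MeasureTheory.lintegral_le_of_forall_le_of_lintegral_ne_top_s6 {α : Type*}
    [MeasurableSpace α] {μ : Measure α} [SigmaFinite μ] {f : α → ℝ≥0∞} {C : ℝ≥0∞}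
    (h : ∀ g : α → ℝ≥0∞, Measurable g → g ≤ f → ∫⁻ x, g x ∂μ ≠ ∞ → ∫⁻ x, g x ∂μ ≤ C) :
    ∫⁻ x, f x ∂μ ≤ C := by
  by_contra! hC
  simp_rw [lintegral_eq_nnreal, lt_iSup_iff] at hC
  obtain ⟨φ, hφf, hφC⟩ := hC
  rw [← SimpleFunc.lintegral_eq_lintegral] at hφC
  obtain ⟨g, hgφ, hg_fin, hCg⟩ := exists_lt_lintegral_simpleFunc_of_lt_lintegral hφC
  refine (h (fun x => g x) g.measurable.coe_nnreal_ennreal (fun x => ?_) hg_fin.ne).not_gt hCg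
  exact (ENNReal.coe_le_coe.2 (hgφ x)).trans (hφf x)

theorem ENNReal.le_rpow_of_le_mul_rpow {p q : ℝ} (hpq : p.HolderConjugate q) {T R : ℝ≥0∞}
    (hT : T ≠ ∞) (h : T ≤ R * T ^ (1 / q)) : T ≤ R ^ p := by
  rcases eq_or_ne T 0 with rfl | hT0
  · exact zero_le
  have hsplit : T = T ^ (1 / p) * T ^ (1 / q) := by
    rw [← ENNReal.rpow_add _ _ hT0 hT, one_div, one_div, hpq.inv_add_inv_eq_one, rpow_one]
  have hTp : T ^ (1 / p) ≤ R := by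
    have hq0 : T ^ (1 / q) ≠ 0 := (rpow_pos (pos_iff_ne_zero.2 hT0) hT).ne'
    have hq_top : T ^ (1 / q) ≠ ∞ := rpow_ne_top_of_nonneg (by simp [hpq.symm.nonneg]) hT
    exact (ENNReal.mul_le_mul_iff_left hq0 hq_top).1 (hsplit.symm.trans_le h)
  calc T = (T ^ (1 / p)) ^ p := by rw [← rpow_mul, one_div_mul_cancel hpq.ne_zero, rpow_one]
    _ ≤ R ^ p := rpow_le_rpow hTp hpq.nonneg

section Minkowski

variable {α β : Type*} [MeasurableSpace α] [MeasurableSpace β] {μ : Measure α} {ν : Measure β}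
  {F : α → β → ℝ≥0∞}

theorem lintegral_rpow_le_mul_lintegral_rpow_of_le_lintegral [SFinite μ] [SFinite ν]
    (hF : Measurable (uncurry F)) {p q : ℝ} (hpq : p.HolderConjugate q) {g : β → ℝ≥0∞}
    (hg : Measurable g) (hgF : ∀ y, g y ≤ ∫⁻ x, F x y ∂μ) :
    ∫⁻ y, g y ^ p ∂ν
      ≤ (∫⁻ x, (∫⁻ y, F x y ^ p ∂ν) ^ (1 / p) ∂μ) * (∫⁻ y, g y ^ p ∂ν) ^ (1 / q) := by
  have hgpq : ∀ y, (g y ^ (p - 1)) ^ q = g y ^ p := fun y => by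
    rw [← rpow_mul, hpq.sub_one_mul_conj]
  calc ∫⁻ y, g y ^ p ∂ν = ∫⁻ y, g y * g y ^ (p - 1) ∂ν := by
        refine lintegral_congr fun y => ?_
        have := rpow_add_of_nonneg (x := g y) 1 (p - 1) zero_le_one hpq.sub_one_pos.le
        rwa [rpow_one, add_sub_cancel] at this
    _ ≤ ∫⁻ y, (∫⁻ x, F x y ∂μ) * g y ^ (p - 1) ∂ν := by gcongr with y; exact hgF y
    _ = ∫⁻ y, ∫⁻ x, F x y * g y ^ (p - 1) ∂μ ∂ν := lintegral_congr fun y =>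
        (lintegral_mul_const _ (hF.comp measurable_prodMk_right)).symm
    _ = ∫⁻ x, ∫⁻ y, F x y * g y ^ (p - 1) ∂ν ∂μ :=
        lintegral_lintegral_swap ((hF.comp measurable_swap).mul
          ((hg.comp measurable_fst).pow_const _)).aemeasurable
    _ ≤ ∫⁻ x, (∫⁻ y, F x y ^ p ∂ν) ^ (1 / p) * (∫⁻ y, g y ^ p ∂ν) ^ (1 / q) ∂μ := by
        gcongr with x
        simpa only [Pi.mul_apply, hgpq] using ENNReal.lintegral_mul_le_Lp_mul_Lq ν hpq
          (f := F x) (g := fun y => g y ^ (p - 1))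
          (hF.comp measurable_prodMk_left).aemeasurable (hg.pow_const _).aemeasurable
    _ = _ := lintegral_mul_const _ ((hF.pow_const p).lintegral_prod_right.pow_const _)

theorem lintegral_rpow_lintegral_le [SFinite μ] [SigmaFinite ν] (hF : Measurable (uncurry F))
    {p : ℝ} (hp : 1 ≤ p) :
    (∫⁻ y, (∫⁻ x, F x y ∂μ) ^ p ∂ν) ^ (1 / p) ≤ ∫⁻ x, (∫⁻ y, F x y ^ p ∂ν) ^ (1 / p) ∂μ := by
  rcases hp.eq_or_lt with rfl | hp
  · simpa only [rpow_one, div_one] using (lintegral_lintegral_swap hF.aemeasurable).ge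
  have hpq := Real.HolderConjugate.conjExponent hp
  have hp0 : 0 < p := hpq.pos
  set R := ∫⁻ x, (∫⁻ y, F x y ^ p ∂ν) ^ (1 / p) ∂μ
  suffices ∫⁻ y, (∫⁻ x, F x y ∂μ) ^ p ∂ν ≤ R ^ p by rwa [one_div, rpow_inv_le_iff hp0]
  refine lintegral_le_of_forall_le_of_lintegral_ne_top_s6 fun g hg hgF hg_fin => ?_
  have hroot : ∀ y, g y ^ (1 / p) ≤ ∫⁻ x, F x y ∂μ := fun y => by
    simpa only [one_div, rpow_rpow_inv hp0.ne'] using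
      rpow_le_rpow (z := 1 / p) (hgF y) (by positivity)
  have h := lintegral_rpow_le_mul_lintegral_rpow_of_le_lintegral (ν := ν) hF hpq
    (hg.pow_const _) hroot
  simp only [← rpow_mul, one_div_mul_cancel hp0.ne', rpow_one] at h
  exact le_rpow_of_le_mul_rpow hpq hg_fin h

theorem lintegral_const_mul_rpow_one_div (μ : Measure α) (c : ℝ≥0∞) {u : α → ℝ≥0∞}
    (hu : Measurable u) {e : ℝ} (he : 0 < e) :
    (∫⁻ x, (c * u x) ^ e ∂μ) ^ (1 / e) = c * (∫⁻ x, u x ^ e ∂μ) ^ (1 / e) := by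
  simp_rw [mul_rpow_of_nonneg _ _ he.le]
  rw [lintegral_const_mul _ (hu.pow_const e), mul_rpow_of_nonneg _ _ (by positivity),
    ← rpow_mul, mul_one_div_cancel he.ne', rpow_one]

theorem lintegral_mul_rpow_lintegral_le [SFinite μ] [SigmaFinite ν] {w : α → ℝ≥0∞}
    (hw : Measurable w) {v : α → β → ℝ≥0∞} (hv : Measurable (uncurry v)) {s : ℝ} (hs : 1 ≤ s) :
    (∫⁻ y, (∫⁻ x, w x * v x y ∂μ) ^ s ∂ν) ^ (1 / s)
      ≤ ∫⁻ x, w x * (∫⁻ y, v x y ^ s ∂ν) ^ (1 / s) ∂μ := by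
  refine (lintegral_rpow_lintegral_le ((hw.comp measurable_fst).mul hv) hs).trans_eq ?_
  exact lintegral_congr fun x =>
    lintegral_const_mul_rpow_one_div ν _ (hv.comp measurable_prodMk_left) (by linarith)

end Minkowski

section MixedNorm

variable {α β : Type*} [MeasurableSpace α] [MeasurableSpace β]

/-- The norm of `L^q_ν(L^p_μ)`: the first variable of `u` is integrated first. -/
noncomputable def mixedLpNorm (μ : Measure α) (p : ℝ) (ν : Measure β) (q : ℝ)
    (u : α → β → ℝ≥0∞) : ℝ≥0∞ :=
  (∫⁻ y, (∫⁻ x, u x y ^ p ∂μ) ^ (q / p) ∂ν) ^ (1 / q)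

theorem mixedLpNorm_le_mixedLpNorm_flip {μ : Measure α} {ν : Measure β} [SFinite μ]
    [SigmaFinite ν] {u : α → β → ℝ≥0∞} (hu : Measurable (uncurry u)) {p q : ℝ} (hp : 0 < p)
    (hpq : p ≤ q) :
    mixedLpNorm μ p ν q u ≤ mixedLpNorm ν q μ p (flip u) := by
  have h := lintegral_rpow_lintegral_le (μ := μ) (ν := ν) (F := fun x y => u x y ^ p)
    (hu.pow_const p) ((one_le_div hp).2 hpq)
  have hpow : ∀ x y, (u x y ^ p) ^ (q / p) = u x y ^ q := fun x y => by
    rw [← rpow_mul, mul_div_cancel₀ _ hp.ne']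
  simp only [hpow, one_div_div] at h
  calc mixedLpNorm μ p ν q u
      = ((∫⁻ y, (∫⁻ x, u x y ^ p ∂μ) ^ (q / p) ∂ν) ^ (p / q)) ^ (1 / p) := by
        rw [mixedLpNorm, ← rpow_mul]
        field_simp
    _ ≤ mixedLpNorm ν q μ p (flip u) := rpow_le_rpow h (by positivity)

end MixedNorm

section KernelOperator

variable {β T X : Type*} [MeasurableSpace β] [MeasurableSpace T] [MeasurableSpace X]

def KernelLpBound (k : X → T → ℝ≥0∞) (ρ : Measure T) (p : ℝ) (μ : Measure X) (r : ℝ)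
    (C : ℝ≥0∞) : Prop :=
  ∀ g : T → ℝ≥0∞, Measurable g →
    (∫⁻ x, (∫⁻ t, k x t * g t ∂ρ) ^ r ∂μ) ^ (1 / r) ≤ C * (∫⁻ t, g t ^ p ∂ρ) ^ (1 / p)

theorem measurable_uncurry_lintegral_mul {ρ : Measure T} [SFinite ρ] {k : X → T → ℝ≥0∞}
    (hk : Measurable (uncurry k)) {u : T → β → ℝ≥0∞} (hu : Measurable (uncurry u)) :
    Measurable (uncurry fun x y => ∫⁻ t, k x t * u t y ∂ρ) := by
  apply Measurable.lintegral_prod_right (f := fun (z : X × β) t => k z.1 t * u t z.2)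
  fun_prop

namespace KernelLpBound

variable {k : X → T → ℝ≥0∞} {ρ : Measure T} {p : ℝ} {μ : Measure X} {r : ℝ} {C : ℝ≥0∞}
  [SFinite ρ] {ν : Measure β} {s : ℝ} {u : T → β → ℝ≥0∞}

theorem mixedLpNorm_left_le (hK : KernelLpBound k ρ p μ r C) (hu : Measurable (uncurry u))
    (hs : 0 < s) :
    mixedLpNorm μ r ν s (fun x y => ∫⁻ t, k x t * u t y ∂ρ) ≤ C * mixedLpNorm ρ p ν s u := by
  have hnorm : Measurable fun y => (∫⁻ t, u t y ^ p ∂ρ) ^ (1 / p) :=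
    ((hu.pow_const p).lintegral_prod_left).pow_const _
  calc mixedLpNorm μ r ν s (fun x y => ∫⁻ t, k x t * u t y ∂ρ)
      ≤ (∫⁻ y, (C * (∫⁻ t, u t y ^ p ∂ρ) ^ (1 / p)) ^ s ∂ν) ^ (1 / s) := by
        refine rpow_le_rpow (lintegral_mono fun y => ?_) (by positivity)
        rw [div_eq_mul_one_div s, mul_comm, rpow_mul]
        exact rpow_le_rpow (hK _ (hu.comp measurable_prodMk_right)) hs.le
    _ = C * mixedLpNorm ρ p ν s u := by
        rw [lintegral_const_mul_rpow_one_div ν C hnorm hs, mixedLpNorm]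
        simp only [← rpow_mul, one_div_mul_eq_div]

theorem mixedLpNorm_right_le [SigmaFinite ν] (hk : Measurable (uncurry k))
    (hK : KernelLpBound k ρ p μ r C) {u : β → T → ℝ≥0∞} (hu : Measurable (uncurry u))
    (hr : 0 ≤ r) (hs : 1 ≤ s) :
    mixedLpNorm ν s μ r (fun y x => ∫⁻ t, k x t * u y t ∂ρ) ≤ C * mixedLpNorm ν s ρ p u := by
  have hnorm : Measurable fun t => (∫⁻ y, u y t ^ s ∂ν) ^ (1 / s) :=
    ((hu.pow_const s).lintegral_prod_left).pow_const _
  calc mixedLpNorm ν s μ r (fun y x => ∫⁻ t, k x t * u y t ∂ρ)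
      ≤ (∫⁻ x, (∫⁻ t, k x t * (∫⁻ y, u y t ^ s ∂ν) ^ (1 / s) ∂ρ) ^ r ∂μ) ^ (1 / r) := by
        refine rpow_le_rpow (lintegral_mono fun x => ?_) (by positivity)
        rw [div_eq_mul_one_div r, mul_comm, rpow_mul]
        exact rpow_le_rpow (lintegral_mul_rpow_lintegral_le (w := k x) (v := fun t y => u y t)
          (hk.comp measurable_prodMk_left) (hu.comp measurable_swap) hs) hr
    _ ≤ C * mixedLpNorm ν s ρ p u := by
        refine (hK _ hnorm).trans_eq ?_
        rw [mixedLpNorm]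
        simp only [← rpow_mul, one_div_mul_eq_div]

end KernelLpBound

end KernelOperator

section ProductOperator

variable {T₁ T₂ X₁ X₂ : Type*} [MeasurableSpace T₁] [MeasurableSpace T₂] [MeasurableSpace X₁]
  [MeasurableSpace X₂] {ρ₁ : Measure T₁} {ρ₂ : Measure T₂} {μ₁ : Measure X₁} {μ₂ : Measure X₂}
  {k₁ : X₁ → T₁ → ℝ≥0∞} {k₂ : X₂ → T₂ → ℝ≥0∞} {f : T₁ × T₂ → ℝ≥0∞}
  {p₁ p₂ r₁ r₂ : ℝ} {C₁ C₂ : ℝ≥0∞}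

noncomputable def productOperator (k₁ : X₁ → T₁ → ℝ≥0∞) (k₂ : X₂ → T₂ → ℝ≥0∞)
    (ρ₁ : Measure T₁) (ρ₂ : Measure T₂) (f : T₁ × T₂ → ℝ≥0∞) (x₁ : X₁) (x₂ : X₂) : ℝ≥0∞ :=
  ∫⁻ t, k₁ x₁ t.1 * k₂ x₂ t.2 * f t ∂(ρ₁.prod ρ₂)

theorem productOperator_eq_lintegral_lintegral [SFinite ρ₂] (hk₁ : Measurable (uncurry k₁))
    (hk₂ : Measurable (uncurry k₂)) (hf : Measurable f) :
    productOperator k₁ k₂ ρ₁ ρ₂ f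
      = fun x₁ x₂ => ∫⁻ t₁, k₁ x₁ t₁ * ∫⁻ t₂, k₂ x₂ t₂ * f (t₁, t₂) ∂ρ₂ ∂ρ₁ := by
  ext x₁ x₂
  rw [productOperator, lintegral_prod _ (by fun_prop)]
  refine lintegral_congr fun t₁ => ?_
  simp_rw [mul_assoc]
  exact lintegral_const_mul _ (by fun_prop)

theorem productOperator_eq_lintegral_lintegral_symm [SFinite ρ₁] [SFinite ρ₂]
    (hk₁ : Measurable (uncurry k₁)) (hk₂ : Measurable (uncurry k₂)) (hf : Measurable f) :
    productOperator k₁ k₂ ρ₁ ρ₂ f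
      = fun x₁ x₂ => ∫⁻ t₂, k₂ x₂ t₂ * ∫⁻ t₁, k₁ x₁ t₁ * f (t₁, t₂) ∂ρ₁ ∂ρ₂ := by
  ext x₁ x₂
  rw [productOperator, lintegral_prod_symm _ (by fun_prop)]
  refine lintegral_congr fun t₂ => ?_
  rw [← lintegral_const_mul _ (by fun_prop)]
  exact lintegral_congr fun t₁ => by ring

theorem mixedLpNorm_productOperator_le_of_p₁_le_r₂ [SFinite ρ₁] [SFinite ρ₂] [SigmaFinite μ₂]
    (hk₁ : Measurable (uncurry k₁)) (hk₂ : Measurable (uncurry k₂))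
    (hK₁ : KernelLpBound k₁ ρ₁ p₁ μ₁ r₁ C₁) (hK₂ : KernelLpBound k₂ ρ₂ p₂ μ₂ r₂ C₂)
    (hf : Measurable f) (hp₁ : 0 < p₁) (hp₁r₂ : p₁ ≤ r₂) :
    mixedLpNorm μ₁ r₁ μ₂ r₂ (productOperator k₁ k₂ ρ₁ ρ₂ f)
      ≤ C₁ * C₂ * mixedLpNorm ρ₂ p₂ ρ₁ p₁ (fun t₂ t₁ => f (t₁, t₂)) := by
  have hF : Measurable (uncurry fun t₂ t₁ => f (t₁, t₂)) := hf.comp measurable_swap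
  have hG : Measurable (uncurry fun t₁ x₂ => ∫⁻ t₂, k₂ x₂ t₂ * f (t₁, t₂) ∂ρ₂) :=
    (measurable_uncurry_lintegral_mul hk₂ hF).comp measurable_swap
  rw [productOperator_eq_lintegral_lintegral hk₁ hk₂ hf, mul_assoc]
  calc _ ≤ C₁ * mixedLpNorm ρ₁ p₁ μ₂ r₂ (fun t₁ x₂ => ∫⁻ t₂, k₂ x₂ t₂ * f (t₁, t₂) ∂ρ₂) :=
        hK₁.mixedLpNorm_left_le hG (hp₁.trans_le hp₁r₂)
    _ ≤ C₁ * mixedLpNorm μ₂ r₂ ρ₁ p₁ (fun x₂ t₁ => ∫⁻ t₂, k₂ x₂ t₂ * f (t₁, t₂) ∂ρ₂) := by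
        gcongr
        exact mixedLpNorm_le_mixedLpNorm_flip hG hp₁ hp₁r₂
    _ ≤ C₁ * (C₂ * mixedLpNorm ρ₂ p₂ ρ₁ p₁ (fun t₂ t₁ => f (t₁, t₂))) := by
        gcongr
        exact hK₂.mixedLpNorm_left_le hF hp₁

theorem mixedLpNorm_productOperator_le_of_p₁_le_p₂ [SigmaFinite ρ₁] [SigmaFinite ρ₂]
    (hk₁ : Measurable (uncurry k₁)) (hk₂ : Measurable (uncurry k₂))
    (hK₁ : KernelLpBound k₁ ρ₁ p₁ μ₁ r₁ C₁) (hK₂ : KernelLpBound k₂ ρ₂ p₂ μ₂ r₂ C₂)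
    (hf : Measurable f) (hr₂ : 0 < r₂) (hp₁ : 1 ≤ p₁) (hp₁p₂ : p₁ ≤ p₂) :
    mixedLpNorm μ₁ r₁ μ₂ r₂ (productOperator k₁ k₂ ρ₁ ρ₂ f)
      ≤ C₁ * C₂ * mixedLpNorm ρ₂ p₂ ρ₁ p₁ (fun t₂ t₁ => f (t₁, t₂)) := by
  have hf' : Measurable (uncurry fun t₁ t₂ => f (t₁, t₂)) := hf
  have hF : Measurable (uncurry fun t₂ t₁ => f (t₁, t₂)) := hf.comp measurable_swap
  have hG : Measurable (uncurry fun t₁ x₂ => ∫⁻ t₂, k₂ x₂ t₂ * f (t₁, t₂) ∂ρ₂) :=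
    (measurable_uncurry_lintegral_mul hk₂ hF).comp measurable_swap
  rw [productOperator_eq_lintegral_lintegral hk₁ hk₂ hf, mul_assoc]
  calc _ ≤ C₁ * mixedLpNorm ρ₁ p₁ μ₂ r₂ (fun t₁ x₂ => ∫⁻ t₂, k₂ x₂ t₂ * f (t₁, t₂) ∂ρ₂) :=
        hK₁.mixedLpNorm_left_le hG hr₂
    _ ≤ C₁ * (C₂ * mixedLpNorm ρ₁ p₁ ρ₂ p₂ (fun t₁ t₂ => f (t₁, t₂))) := by
        gcongr
        exact hK₂.mixedLpNorm_right_le hk₂ hf' hr₂.le hp₁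
    _ ≤ C₁ * (C₂ * mixedLpNorm ρ₂ p₂ ρ₁ p₁ (fun t₂ t₁ => f (t₁, t₂))) := by
        gcongr
        exact mixedLpNorm_le_mixedLpNorm_flip hf' (zero_lt_one.trans_le hp₁) hp₁p₂

theorem mixedLpNorm_productOperator_le_of_r₁_le_p₂ [SFinite ρ₁] [SigmaFinite ρ₂]
    [SigmaFinite μ₁] (hk₁ : Measurable (uncurry k₁)) (hk₂ : Measurable (uncurry k₂))
    (hK₁ : KernelLpBound k₁ ρ₁ p₁ μ₁ r₁ C₁) (hK₂ : KernelLpBound k₂ ρ₂ p₂ μ₂ r₂ C₂)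
    (hf : Measurable f) (hr₂ : 0 ≤ r₂) (hr₁ : 1 ≤ r₁) (hr₁p₂ : r₁ ≤ p₂) :
    mixedLpNorm μ₁ r₁ μ₂ r₂ (productOperator k₁ k₂ ρ₁ ρ₂ f)
      ≤ C₁ * C₂ * mixedLpNorm ρ₂ p₂ ρ₁ p₁ (fun t₂ t₁ => f (t₁, t₂)) := by
  have hf' : Measurable (uncurry fun t₁ t₂ => f (t₁, t₂)) := hf
  have hF : Measurable (uncurry fun t₂ t₁ => f (t₁, t₂)) := hf.comp measurable_swap
  have hH : Measurable (uncurry fun x₁ t₂ => ∫⁻ t₁, k₁ x₁ t₁ * f (t₁, t₂) ∂ρ₁) :=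
    measurable_uncurry_lintegral_mul hk₁ hf'
  rw [productOperator_eq_lintegral_lintegral_symm hk₁ hk₂ hf, mul_comm C₁, mul_assoc]
  calc _ ≤ C₂ * mixedLpNorm μ₁ r₁ ρ₂ p₂ (fun x₁ t₂ => ∫⁻ t₁, k₁ x₁ t₁ * f (t₁, t₂) ∂ρ₁) :=
        hK₂.mixedLpNorm_right_le hk₂ hH hr₂ hr₁
    _ ≤ C₂ * mixedLpNorm ρ₂ p₂ μ₁ r₁ (fun t₂ x₁ => ∫⁻ t₁, k₁ x₁ t₁ * f (t₁, t₂) ∂ρ₁) := by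
        gcongr
        exact mixedLpNorm_le_mixedLpNorm_flip hH (zero_lt_one.trans_le hr₁) hr₁p₂
    _ ≤ C₂ * (C₁ * mixedLpNorm ρ₂ p₂ ρ₁ p₁ (fun t₂ t₁ => f (t₁, t₂))) := by
        gcongr
        exact hK₁.mixedLpNorm_right_le hk₁ hF (zero_le_one.trans hr₁) (hr₁.trans hr₁p₂)

theorem mixedLpNorm_productOperator_le_of_r₁_le_r₂ [SFinite ρ₁] [SFinite ρ₂] [SFinite μ₁]
    [SigmaFinite μ₂] (hk₁ : Measurable (uncurry k₁)) (hk₂ : Measurable (uncurry k₂))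
    (hK₁ : KernelLpBound k₁ ρ₁ p₁ μ₁ r₁ C₁) (hK₂ : KernelLpBound k₂ ρ₂ p₂ μ₂ r₂ C₂)
    (hf : Measurable f) (hp₁ : 0 < p₁) (hr₁ : 0 < r₁) (hr₂ : 1 ≤ r₂) (hr₁r₂ : r₁ ≤ r₂) :
    mixedLpNorm μ₁ r₁ μ₂ r₂ (productOperator k₁ k₂ ρ₁ ρ₂ f)
      ≤ C₁ * C₂ * mixedLpNorm ρ₂ p₂ ρ₁ p₁ (fun t₂ t₁ => f (t₁, t₂)) := by
  have hF : Measurable (uncurry fun t₂ t₁ => f (t₁, t₂)) := hf.comp measurable_swap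
  have hG : Measurable (uncurry fun x₂ t₁ => ∫⁻ t₂, k₂ x₂ t₂ * f (t₁, t₂) ∂ρ₂) :=
    measurable_uncurry_lintegral_mul hk₂ hF
  have hKG : Measurable (uncurry fun x₁ x₂ =>
      ∫⁻ t₁, k₁ x₁ t₁ * ∫⁻ t₂, k₂ x₂ t₂ * f (t₁, t₂) ∂ρ₂ ∂ρ₁) :=
    measurable_uncurry_lintegral_mul hk₁ (hG.comp measurable_swap)
  rw [productOperator_eq_lintegral_lintegral hk₁ hk₂ hf, mul_assoc]
  calc _ ≤ mixedLpNorm μ₂ r₂ μ₁ r₁ (fun x₂ x₁ =>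
          ∫⁻ t₁, k₁ x₁ t₁ * ∫⁻ t₂, k₂ x₂ t₂ * f (t₁, t₂) ∂ρ₂ ∂ρ₁) :=
        mixedLpNorm_le_mixedLpNorm_flip hKG hr₁ hr₁r₂
    _ ≤ C₁ * mixedLpNorm μ₂ r₂ ρ₁ p₁ (fun x₂ t₁ => ∫⁻ t₂, k₂ x₂ t₂ * f (t₁, t₂) ∂ρ₂) :=
        hK₁.mixedLpNorm_right_le hk₁ hG hr₁.le hr₂
    _ ≤ C₁ * (C₂ * mixedLpNorm ρ₂ p₂ ρ₁ p₁ (fun t₂ t₁ => f (t₁, t₂))) := by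
        gcongr
        exact hK₂.mixedLpNorm_left_le hF hp₁

end ProductOperator

theorem product_operator_permuted_mixed_norm_general
    {T1 T2 X1 X2 : Type*} [MeasurableSpace T1] [MeasurableSpace T2]
    [MeasurableSpace X1] [MeasurableSpace X2]
    (lam1 : Measure T1) (lam2 : Measure T2) (mu1 : Measure X1) (mu2 : Measure X2)
    [SigmaFinite lam1] [SigmaFinite lam2] [SigmaFinite mu1] [SigmaFinite mu2]
    (k1 : X1 → T1 → ℝ≥0∞) (k2 : X2 → T2 → ℝ≥0∞)
    (hk1 : Measurable fun p : X1 × T1 => k1 p.1 p.2)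
    (hk2 : Measurable fun p : X2 × T2 => k2 p.1 p.2)
    (p1 p2 r1 r2 : ℝ) (C1 C2 : ℝ≥0∞)
    (hp1 : 0 < p1)
    (hr1' : 1 ≤ r1) (hr2' : 1 ≤ r2) (hmm : min p1 r1 ≤ max p2 r2)
    (hK1 : ∀ g : T1 → ℝ≥0∞, Measurable g →
      (∫⁻ x, (∫⁻ t, k1 x t * g t ∂lam1) ^ r1 ∂mu1) ^ (1 / r1)
        ≤ C1 * (∫⁻ t, g t ^ p1 ∂lam1) ^ (1 / p1))
    (hK2 : ∀ g : T2 → ℝ≥0∞, Measurable g →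
      (∫⁻ x, (∫⁻ t, k2 x t * g t ∂lam2) ^ r2 ∂mu2) ^ (1 / r2)
        ≤ C2 * (∫⁻ t, g t ^ p2 ∂lam2) ^ (1 / p2))
    (f : T1 × T2 → ℝ≥0∞) (hf : Measurable f) :
    (∫⁻ x2, (∫⁻ x1,
        (∫⁻ t, k1 x1 t.1 * k2 x2 t.2 * f t ∂(lam1.prod lam2)) ^ r1 ∂mu1) ^ (r2 / r1)
      ∂mu2) ^ (1 / r2)
      ≤ C1 * C2 *
        (∫⁻ t1, (∫⁻ t2, f (t1, t2) ^ p2 ∂lam2) ^ (p1 / p2) ∂lam1) ^ (1 / p1) := by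
  change mixedLpNorm mu1 r1 mu2 r2 (productOperator k1 k2 lam1 lam2 f)
    ≤ C1 * C2 * mixedLpNorm lam2 p2 lam1 p1 (fun t2 t1 => f (t1, t2))
  rcases le_or_gt p1 r2 with hp1r2 | hr2p1
  · exact mixedLpNorm_productOperator_le_of_p₁_le_r₂ hk1 hk2 hK1 hK2 hf hp1 hp1r2
  obtain hp1p2 | hr1p2 | hr1r2 : p1 ≤ p2 ∨ r1 ≤ p2 ∨ r1 ≤ r2 := by
    simp only [min_le_iff, le_max_iff] at hmm
    have := hr2p1.not_ge
    tauto
  · exact mixedLpNorm_productOperator_le_of_p₁_le_p₂ hk1 hk2 hK1 hK2 hf (by linarith)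
      (by linarith) hp1p2
  · exact mixedLpNorm_productOperator_le_of_r₁_le_p₂ hk1 hk2 hK1 hK2 hf (by linarith) hr1' hr1p2
  · exact mixedLpNorm_productOperator_le_of_r₁_le_r₂ hk1 hk2 hK1 hK2 hf hp1 (by linarith) hr2'
      hr1r2

theorem product_operator_permuted_mixed_norm
    {T1 T2 X1 X2 : Type*} [MeasurableSpace T1] [MeasurableSpace T2]
    [MeasurableSpace X1] [MeasurableSpace X2]
    (lam1 : Measure T1) (lam2 : Measure T2) (mu1 : Measure X1) (mu2 : Measure X2)
    [SigmaFinite lam1] [SigmaFinite lam2] [SigmaFinite mu1] [SigmaFinite mu2]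
    (k1 : X1 → T1 → ℝ≥0∞) (k2 : X2 → T2 → ℝ≥0∞)
    (hk1 : Measurable fun p : X1 × T1 => k1 p.1 p.2)
    (hk2 : Measurable fun p : X2 × T2 => k2 p.1 p.2)
    (p1 p2 r1 r2 : ℝ) (C1 C2 : ℝ≥0∞)
    (hp1 : 0 < p1) (hp2 : 0 < p2) (hr1 : 0 < r1) (hr2 : 0 < r2)
    (hr1' : 1 ≤ r1) (hr2' : 1 ≤ r2) (hmm : min p1 r1 ≤ max p2 r2)
    (hK1 : ∀ g : T1 → ℝ≥0∞, Measurable g →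
      (∫⁻ x, (∫⁻ t, k1 x t * g t ∂lam1) ^ r1 ∂mu1) ^ (1 / r1)
        ≤ C1 * (∫⁻ t, g t ^ p1 ∂lam1) ^ (1 / p1))
    (hK2 : ∀ g : T2 → ℝ≥0∞, Measurable g →
      (∫⁻ x, (∫⁻ t, k2 x t * g t ∂lam2) ^ r2 ∂mu2) ^ (1 / r2)
        ≤ C2 * (∫⁻ t, g t ^ p2 ∂lam2) ^ (1 / p2))
    (f : T1 × T2 → ℝ≥0∞) (hf : Measurable f) :
    (∫⁻ x2, (∫⁻ x1,
        (∫⁻ t, k1 x1 t.1 * k2 x2 t.2 * f t ∂(lam1.prod lam2)) ^ r1 ∂mu1) ^ (r2 / r1)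
      ∂mu2) ^ (1 / r2)
      ≤ C1 * C2 *
        (∫⁻ t1, (∫⁻ t2, f (t1, t2) ^ p2 ∂lam2) ^ (p1 / p2) ∂lam1) ^ (1 / p1) :=
  product_operator_permuted_mixed_norm_general lam1 lam2 mu1 mu2 k1 k2 hk1 hk2 p1 p2 r1 r2 C1 C2 hp1
    hr1' hr2' hmm hK1 hK2 f hf
end

section
/- Let $1<p\le 2$ and suppose the one-variable Laplace transform $\mathscr{L}g(x)=\int_0^\infty e^{-xt}g(t)\,dt$ satisfies $\|\mathscr{L}g\|_{L^{p'}(0,\infty)}\le C(p)\|g\|_{L^p(0,\infty)}$ for all nonnegative $g$, where $1/p+1/p'=1$. Then for $p_1,p_2\in(1,2]$, the bivariate Laplace transform $\mathscr{L}_2 f(x_1,x_2)=\int_0^\infty\int_0^\infty e^{-x_1t_1-x_2t_2}f(t_1,t_2)\,dt_1\,dt_2$ satisfies the permuted mixed norm inequality $\|\mathscr{L}_2 f\|_{L^{(p_1',p_2')}}\le C(p_1)C(p_2)\|f\|_{L^{(p_2,p_1)}}$ for all nonnegative measurable $f$ on $(0,\infty)^2$. -/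
/-!
Writing the kernel as `e^{-x₁t₁} e^{-x₂t₂}`, the bivariate transform is the one-variable transform
in `t₁` of `H(t₁, x₂) = ℒ(f(t₁, ·))(x₂)`. The bound for `ℒ` in `x₁` leaves the
`L^{p₂'}_{x₂} L^{p₁}_{t₁}` norm of `H`; Minkowski's integral inequality with exponent
`p₂'/p₁ ≥ 1` (this is where `p₁ ≤ 2 ≤ p₂'` enters) moves it to `L^{p₁}_{t₁} L^{p₂'}_{x₂}`, and the
bound for `ℒ` in `x₂` finishes.
-/

open MeasureTheory ENNReal Set

theorem ENNReal.rpow_one_div_le_of_le_rpow_mul {a M : ℝ≥0∞} {p q : ℝ} (hpq : p.HolderConjugate q)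
    (ha : a ≠ ∞) (h : a ≤ a ^ (1 / q) * M) : a ^ (1 / p) ≤ M := by
  rcases eq_or_ne a 0 with rfl | ha₀
  · rw [zero_rpow_of_pos (one_div_pos.2 hpq.pos)]
    exact zero_le
  have hq : 0 < 1 / q := one_div_pos.2 hpq.symm.pos
  have hsplit : a ^ (1 / q) * a ^ (1 / p) = a := by
    rw [← rpow_add_of_nonneg _ _ hq.le (one_div_pos.2 hpq.pos).le, one_div, one_div,
      add_comm, hpq.inv_add_inv_eq_one, rpow_one]
  rwa [← ENNReal.mul_le_mul_iff_right (by simp [ha₀, hpq.symm.nonneg])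
    (rpow_ne_top_of_nonneg hq.le ha), hsplit]

theorem ENNReal.rpow_div_le_of_rpow_one_div_le {a b C : ℝ≥0∞} {p q s : ℝ} (hs : 0 ≤ s)
    (h : a ^ (1 / q) ≤ C * b ^ (1 / p)) : a ^ (s / q) ≤ C ^ s * b ^ (s / p) :=
  calc a ^ (s / q) = (a ^ (1 / q)) ^ s := by rw [← rpow_mul, one_div_mul_eq_div]
    _ ≤ (C * b ^ (1 / p)) ^ s := rpow_le_rpow h hs
    _ = C ^ s * b ^ (s / p) := by rw [mul_rpow_of_nonneg _ _ hs, ← rpow_mul, one_div_mul_eq_div]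

section Minkowski

variable {α β : Type*} [MeasurableSpace α] [MeasurableSpace β] {μ : Measure α} {ν : Measure β}
  {F : α × β → ℝ≥0∞} {r : ℝ}

/-- Hölder against `ψ ^ (r - 1)` gives `A ≤ A ^ (1 / q) * M` for `A = ∫⁻ ψ ^ r`; finiteness of `A`
is what allows cancelling. -/
theorem lintegral_rpow_le_of_le_lintegral [SFinite μ] [SFinite ν] (hr : 1 < r)
    (hF : Measurable F) {ψ : β → ℝ≥0∞} (hψ : Measurable ψ)
    (hψF : ∀ y, ψ y ≤ ∫⁻ x, F (x, y) ∂μ) (hfin : ∫⁻ y, ψ y ^ r ∂ν ≠ ∞) :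
    (∫⁻ y, ψ y ^ r ∂ν) ^ (1 / r) ≤ ∫⁻ x, (∫⁻ y, F (x, y) ^ r ∂ν) ^ (1 / r) ∂μ := by
  set q := r.conjExponent
  have hrq : r.HolderConjugate q := .conjExponent hr
  have hpow : ∀ y, ψ y ^ r = ψ y ^ (r - 1) * ψ y := fun y => by
    simpa only [sub_add_cancel, rpow_one] using
      ENNReal.rpow_add_of_nonneg (x := ψ y) (r - 1) 1 (by linarith) zero_le_one
  have hpow_q : ∀ y, (ψ y ^ (r - 1)) ^ q = ψ y ^ r := fun y => by
    rw [← rpow_mul, hrq.sub_one_mul_conj]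
  refine rpow_one_div_le_of_le_rpow_mul hrq hfin ?_
  calc ∫⁻ y, ψ y ^ r ∂ν = ∫⁻ y, ψ y ^ (r - 1) * ψ y ∂ν := by simp_rw [hpow]
    _ ≤ ∫⁻ y, ∫⁻ x, ψ y ^ (r - 1) * F (x, y) ∂μ ∂ν := lintegral_mono fun y => by
      rw [lintegral_const_mul (f := fun x => F (x, y)) _ (by fun_prop)]
      gcongr
      exact hψF y
    _ = ∫⁻ x, ∫⁻ y, ψ y ^ (r - 1) * F (x, y) ∂ν ∂μ :=
      (lintegral_lintegral_swap
        (((hψ.comp measurable_snd).pow_const _).mul hF).aemeasurable).symm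
    _ ≤ ∫⁻ x, (∫⁻ y, (ψ y ^ (r - 1)) ^ q ∂ν) ^ (1 / q) * (∫⁻ y, F (x, y) ^ r ∂ν) ^ (1 / r) ∂μ :=
      lintegral_mono fun x => lintegral_mul_le_Lp_mul_Lq ν hrq.symm
        (hψ.pow_const _).aemeasurable (hF.comp measurable_prodMk_left).aemeasurable
    _ = (∫⁻ y, ψ y ^ r ∂ν) ^ (1 / q) * ∫⁻ x, (∫⁻ y, F (x, y) ^ r ∂ν) ^ (1 / r) ∂μ := by
      simp_rw [hpow_q]
      exact lintegral_const_mul _ ((hF.pow_const r).lintegral_prod_right'.pow_const _)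

theorem lintegral_rpow_eq_iSup_min_natCast {φ : β → ℝ≥0∞} (hφ : Measurable φ) (hr : 0 < r) :
    ∫⁻ y, φ y ^ r ∂ν = ⨆ n : ℕ, ∫⁻ y, min (φ y) n ^ r ∂ν := by
  have hmono : Monotone fun (n : ℕ) y => min (φ y) n ^ r := fun m n hmn y =>
    rpow_le_rpow (min_le_min_left _ (by exact_mod_cast hmn)) hr.le
  rw [← lintegral_iSup (fun n => (hφ.min measurable_const).pow_const r) hmono]
  congr 1 with y
  have hsup : ⨆ n : ℕ, min (φ y) n = φ y := by
    rw [← inf_iSup_eq, iSup_natCast, inf_top_eq]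
  simpa only [orderIsoRpow_apply, OrderIso.map_iSup] using
    congrArg (orderIsoRpow r hr) hsup.symm

theorem lintegral_Lp_lintegral_le [SFinite μ] [SigmaFinite ν] (hr : 1 ≤ r) (hF : Measurable F) :
    (∫⁻ y, (∫⁻ x, F (x, y) ∂μ) ^ r ∂ν) ^ (1 / r) ≤ ∫⁻ x, (∫⁻ y, F (x, y) ^ r ∂ν) ^ (1 / r) ∂μ := by
  rcases hr.eq_or_lt with rfl | hr
  · simpa using (lintegral_lintegral_swap (f := fun x y => F (x, y)) hF.aemeasurable).ge
  have hr₀ : 0 < r := by linarith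
  set φ := fun y => ∫⁻ x, F (x, y) ∂μ
  have hφ : Measurable φ := hF.lintegral_prod_left'
  rw [one_div, rpow_inv_le_iff hr₀]
  -- Restricting to sets of finite measure and truncating `φ` makes the integrals finite.
  refine lintegral_le_of_forall_fin_meas_le _ fun s _ hνs => ?_
  rw [lintegral_rpow_eq_iSup_min_natCast hφ hr₀]
  refine iSup_le fun n => ?_
  have hfin : ∫⁻ y in s, min (φ y) n ^ r ∂ν ≠ ∞ := by
    refine ne_top_of_le_ne_top ?_ (setLIntegral_mono measurable_const fun y _ =>
      rpow_le_rpow (min_le_right (φ y) n) hr₀.le)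
    rw [setLIntegral_const]
    exact mul_ne_top (rpow_ne_top_of_nonneg hr₀.le (natCast_ne_top n)) hνs
  rw [← rpow_inv_le_iff hr₀, ← one_div]
  calc _ ≤ ∫⁻ x, (∫⁻ y in s, F (x, y) ^ r ∂ν) ^ (1 / r) ∂μ :=
        lintegral_rpow_le_of_le_lintegral hr hF (hφ.min measurable_const)
          (fun y => min_le_left _ _) hfin
    _ ≤ ∫⁻ x, (∫⁻ y, F (x, y) ^ r ∂ν) ^ (1 / r) ∂μ :=
        lintegral_mono fun x => rpow_le_rpow (setLIntegral_le_lintegral _ _) (by positivity)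

theorem lintegral_const_rpow_mul_rpow_one_div {g : β → ℝ≥0∞} (hg : Measurable g) (C : ℝ≥0∞)
    {s : ℝ} (hs : 0 < s) :
    (∫⁻ y, C ^ s * g y ∂ν) ^ (1 / s) = C * (∫⁻ y, g y ∂ν) ^ (1 / s) := by
  rw [lintegral_const_mul _ hg, mul_rpow_of_nonneg _ _ (by positivity), ← rpow_mul,
    mul_one_div_cancel hs.ne', rpow_one]

end Minkowski

theorem kernel_prod_permuted_mixed_norm_le {S₁ S₂ X₁ X₂ : Type*} [MeasurableSpace S₁]
    [MeasurableSpace S₂] [MeasurableSpace X₁] [MeasurableSpace X₂] {σ₁ : Measure S₁}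
    {σ₂ : Measure S₂} {ξ₁ : Measure X₁} {ξ₂ : Measure X₂} [SFinite σ₁] [SFinite σ₂]
    [SigmaFinite ξ₂] {k₁ : X₁ → S₁ → ℝ≥0∞} {k₂ : X₂ → S₂ → ℝ≥0∞} {p₁ p₂ q₁ q₂ : ℝ}
    (hp₁ : 0 < p₁) (hp₁q₂ : p₁ ≤ q₂) {C₁ C₂ : ℝ≥0∞}
    (hk₁ : ∀ x, Measurable (k₁ x)) (hk₂ : Measurable (Function.uncurry k₂))
    (hT₁ : ∀ g : S₁ → ℝ≥0∞, Measurable g →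
      (∫⁻ x, (∫⁻ t, k₁ x t * g t ∂σ₁) ^ q₁ ∂ξ₁) ^ (1 / q₁) ≤ C₁ * (∫⁻ t, g t ^ p₁ ∂σ₁) ^ (1 / p₁))
    (hT₂ : ∀ g : S₂ → ℝ≥0∞, Measurable g →
      (∫⁻ x, (∫⁻ t, k₂ x t * g t ∂σ₂) ^ q₂ ∂ξ₂) ^ (1 / q₂) ≤ C₂ * (∫⁻ t, g t ^ p₂ ∂σ₂) ^ (1 / p₂))
    {f : S₁ × S₂ → ℝ≥0∞} (hf : Measurable f) :
    (∫⁻ x₂, (∫⁻ x₁, (∫⁻ t₂, ∫⁻ t₁, k₁ x₁ t₁ * k₂ x₂ t₂ * f (t₁, t₂) ∂σ₁ ∂σ₂) ^ q₁ ∂ξ₁)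
        ^ (q₂ / q₁) ∂ξ₂) ^ (1 / q₂)
      ≤ C₁ * C₂ * (∫⁻ t₁, (∫⁻ t₂, f (t₁, t₂) ^ p₂ ∂σ₂) ^ (p₁ / p₂) ∂σ₁) ^ (1 / p₁) := by
  have hq₂ : 0 < q₂ := hp₁.trans_le hp₁q₂
  set H : S₁ → X₂ → ℝ≥0∞ := fun t₁ x₂ => ∫⁻ t₂, k₂ x₂ t₂ * f (t₁, t₂) ∂σ₂
  have hH : Measurable (Function.uncurry H) :=
    Measurable.lintegral_prod_right' (f := fun z : (S₁ × X₂) × S₂ => k₂ z.1.2 z.2 * f (z.1.1, z.2))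
      ((hk₂.comp (measurable_fst.snd.prodMk measurable_snd)).mul
        (hf.comp (measurable_fst.fst.prodMk measurable_snd)))
  have hfactor : ∀ x₁ x₂, ∫⁻ t₂, ∫⁻ t₁, k₁ x₁ t₁ * k₂ x₂ t₂ * f (t₁, t₂) ∂σ₁ ∂σ₂
      = ∫⁻ t₁, k₁ x₁ t₁ * H t₁ x₂ ∂σ₁ := fun x₁ x₂ => by
    rw [← lintegral_lintegral_swap (by fun_prop)]
    refine lintegral_congr fun t₁ => ?_
    simp_rw [mul_assoc]
    exact lintegral_const_mul _ (by fun_prop)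
  have hstep₁ : ∀ x₂, (∫⁻ x₁, (∫⁻ t₁, k₁ x₁ t₁ * H t₁ x₂ ∂σ₁) ^ q₁ ∂ξ₁) ^ (q₂ / q₁)
      ≤ C₁ ^ q₂ * (∫⁻ t₁, H t₁ x₂ ^ p₁ ∂σ₁) ^ (q₂ / p₁) := fun x₂ =>
    rpow_div_le_of_rpow_one_div_le hq₂.le (hT₁ _ (hH.comp (measurable_id.prodMk measurable_const)))
  have hstep₂ : ∀ t₁, (∫⁻ x₂, (H t₁ x₂ ^ p₁) ^ (q₂ / p₁) ∂ξ₂) ^ (1 / (q₂ / p₁))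
      ≤ C₂ ^ p₁ * (∫⁻ t₂, f (t₁, t₂) ^ p₂ ∂σ₂) ^ (p₁ / p₂) := fun t₁ => by
    simp_rw [← rpow_mul, mul_div_cancel₀ _ hp₁.ne', one_div_div]
    exact rpow_div_le_of_rpow_one_div_le hp₁.le
      (hT₂ _ (hf.comp (measurable_const.prodMk measurable_id)))
  calc _ = (∫⁻ x₂, (∫⁻ x₁, (∫⁻ t₁, k₁ x₁ t₁ * H t₁ x₂ ∂σ₁) ^ q₁ ∂ξ₁) ^ (q₂ / q₁) ∂ξ₂)
        ^ (1 / q₂) := by simp_rw [hfactor]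
    _ ≤ (∫⁻ x₂, C₁ ^ q₂ * (∫⁻ t₁, H t₁ x₂ ^ p₁ ∂σ₁) ^ (q₂ / p₁) ∂ξ₂) ^ (1 / q₂) := by
        gcongr with x₂
        exact hstep₁ x₂
    _ = C₁ * ((∫⁻ x₂, (∫⁻ t₁, H t₁ x₂ ^ p₁ ∂σ₁) ^ (q₂ / p₁) ∂ξ₂) ^ (1 / (q₂ / p₁))) ^ (1 / p₁) := by
        rw [lintegral_const_rpow_mul_rpow_one_div (by fun_prop) _ hq₂, ← rpow_mul]
        congr 2
        field_simp
    _ ≤ C₁ * (∫⁻ t₁, (∫⁻ x₂, (H t₁ x₂ ^ p₁) ^ (q₂ / p₁) ∂ξ₂) ^ (1 / (q₂ / p₁)) ∂σ₁) ^ (1 / p₁) := by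
        gcongr
        exact lintegral_Lp_lintegral_le ((one_le_div hp₁).2 hp₁q₂) (hH.pow_const p₁)
    _ ≤ C₁ * (∫⁻ t₁, C₂ ^ p₁ * (∫⁻ t₂, f (t₁, t₂) ^ p₂ ∂σ₂) ^ (p₁ / p₂) ∂σ₁) ^ (1 / p₁) := by
        gcongr with t₁
        exact hstep₂ t₁
    _ = _ := by
        rw [lintegral_const_rpow_mul_rpow_one_div (by fun_prop) _ hp₁, mul_assoc]

theorem bivariate_laplace_permuted_mixed_norm_general
    (p1 p2 p1' p2' : ℝ) (hp1 : 1 < p1) (hp1le : p1 ≤ 2) (hp2 : 1 < p2) (hp2le : p2 ≤ 2)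
    (hc2 : 1 / p2 + 1 / p2' = 1)
    (C1 C2 : ℝ≥0∞)
    (hL1 : ∀ g : ℝ → ℝ≥0∞, Measurable g →
      (∫⁻ x in Ioi (0 : ℝ),
          (∫⁻ t in Ioi (0 : ℝ), ENNReal.ofReal (Real.exp (-(x * t))) * g t) ^ p1') ^ (1 / p1')
        ≤ C1 * (∫⁻ t in Ioi (0 : ℝ), g t ^ p1) ^ (1 / p1))
    (hL2 : ∀ g : ℝ → ℝ≥0∞, Measurable g →
      (∫⁻ x in Ioi (0 : ℝ),
          (∫⁻ t in Ioi (0 : ℝ), ENNReal.ofReal (Real.exp (-(x * t))) * g t) ^ p2') ^ (1 / p2')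
        ≤ C2 * (∫⁻ t in Ioi (0 : ℝ), g t ^ p2) ^ (1 / p2))
    (f : ℝ × ℝ → ℝ≥0∞) (hf : Measurable f) :
    (∫⁻ x2 in Ioi (0 : ℝ), (∫⁻ x1 in Ioi (0 : ℝ),
        (∫⁻ t2 in Ioi (0 : ℝ), ∫⁻ t1 in Ioi (0 : ℝ),
            ENNReal.ofReal (Real.exp (-(x1 * t1 + x2 * t2))) * f (t1, t2)) ^ p1') ^ (p2' / p1'))
      ^ (1 / p2')
      ≤ C1 * C2 *
        (∫⁻ t1 in Ioi (0 : ℝ),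
            (∫⁻ t2 in Ioi (0 : ℝ), f (t1, t2) ^ p2) ^ (p1 / p2)) ^ (1 / p1) := by
  have hp1p2' : p1 ≤ p2' := by
    have h1 : 1 / 2 ≤ 1 / p1 := one_div_le_one_div_of_le (by linarith) hp1le
    have h2 : 1 / 2 ≤ 1 / p2 := one_div_le_one_div_of_le (by linarith) hp2le
    have h3 : 1 / p2 < 1 := (div_lt_one (by linarith)).2 hp2
    exact le_of_one_div_le_one_div (one_div_pos.1 (by linarith)) (by linarith)
  simp_rw [neg_add, Real.exp_add, ENNReal.ofReal_mul (Real.exp_nonneg _)]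
  exact kernel_prod_permuted_mixed_norm_le (by linarith) hp1p2' (fun x => by fun_prop)
    (by fun_prop) hL1 hL2 hf

/-- The bivariate Laplace transform satisfies a permuted mixed norm inequality,
given `L^p → L^{p'}` bounds for the one-variable Laplace transform. -/
theorem bivariate_laplace_permuted_mixed_norm
    (p1 p2 p1' p2' : ℝ) (hp1 : 1 < p1) (hp1le : p1 ≤ 2) (hp2 : 1 < p2) (hp2le : p2 ≤ 2)
    (hc1 : 1 / p1 + 1 / p1' = 1) (hc2 : 1 / p2 + 1 / p2' = 1)
    (C1 C2 : ℝ≥0∞)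
    (hL1 : ∀ g : ℝ → ℝ≥0∞, Measurable g →
      (∫⁻ x in Ioi (0 : ℝ),
          (∫⁻ t in Ioi (0 : ℝ), ENNReal.ofReal (Real.exp (-(x * t))) * g t) ^ p1') ^ (1 / p1')
        ≤ C1 * (∫⁻ t in Ioi (0 : ℝ), g t ^ p1) ^ (1 / p1))
    (hL2 : ∀ g : ℝ → ℝ≥0∞, Measurable g →
      (∫⁻ x in Ioi (0 : ℝ),
          (∫⁻ t in Ioi (0 : ℝ), ENNReal.ofReal (Real.exp (-(x * t))) * g t) ^ p2') ^ (1 / p2')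
        ≤ C2 * (∫⁻ t in Ioi (0 : ℝ), g t ^ p2) ^ (1 / p2))
    (f : ℝ × ℝ → ℝ≥0∞) (hf : Measurable f) :
    (∫⁻ x2 in Ioi (0 : ℝ), (∫⁻ x1 in Ioi (0 : ℝ),
        (∫⁻ t2 in Ioi (0 : ℝ), ∫⁻ t1 in Ioi (0 : ℝ),
            ENNReal.ofReal (Real.exp (-(x1 * t1 + x2 * t2))) * f (t1, t2)) ^ p1') ^ (p2' / p1'))
      ^ (1 / p2')
      ≤ C1 * C2 *
        (∫⁻ t1 in Ioi (0 : ℝ),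
            (∫⁻ t2 in Ioi (0 : ℝ), f (t1, t2) ^ p2) ^ (p1 / p2)) ^ (1 / p1) :=
  bivariate_laplace_permuted_mixed_norm_general p1 p2 p1' p2' hp1 hp1le hp2 hp2le hc2 C1 C2 hL1 hL2
    f hf
end

section
/- Let $p_1,p_2,q_1,q_2,r_1,r_2\in[1,\infty)$ with $1/p_j+1/q_j=1/r_j+1$ for $j=1,2$. Then for all nonnegative measurable $f,g:\mathbb{R}^2\to[0,\infty]$, $\left(\int_{\mathbb{R}}\left(\int_{\mathbb{R}}(f*g)(x_1,x_2)^{r_1}dx_1\right)^{r_2/r_1}dx_2\right)^{1/r_2}\le\left(\int_{\mathbb{R}}\left(\int_{\mathbb{R}}f^{p_1}dt_1\right)^{p_2/p_1}dt_2\right)^{1/p_2}\left(\int_{\mathbb{R}}\left(\int_{\mathbb{R}}g^{q_1}dt_1\right)^{q_2/q_1}dt_2\right)^{1/q_2}$, where $(f*g)(x)=\int_{\mathbb{R}^2}f(x-t)g(t)\,dt$. -/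
/-!
Write the convolution on `G₁ × G₂` as `(f ⋆ g)(x₁, x₂) = ∫ (f(·, t₂) ⋆ g(·, x₂ - t₂))(x₁) dt₂`.
Minkowski's integral inequality in `x₁` and the one-variable Young inequality bound its `L^{r₁}`
norm in `x₁` by the convolution in `x₂` of `t₂ ↦ ‖f(·, t₂)‖_{p₁}` and `t₂ ↦ ‖g(·, t₂)‖_{q₁}`, and
the one-variable Young inequality in `x₂` concludes.

Young's inequality is Hölder's inequality for the three factors of
`f g = (f^p g^q)^{1/r} (f^p)^{1/p - 1/r} (g^q)^{1/q - 1/r}`. Minkowski's inequality follows from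
Hölder's inequality by duality, testing `(∫ F(·, y) dy)^p` against functions below it with finite
integral; on a σ-finite space these exhaust its integral.
-/

open MeasureTheory ENNReal Function

namespace ENNReal

theorem rpow_one_div_le_of_le_mul_rpow {A B : ℝ≥0∞} {p q : ℝ} (hpq : p.HolderConjugate q)
    (hA : A ≠ ∞) (h : A ≤ B * A ^ (1 / q)) : A ^ (1 / p) ≤ B := by
  rcases eq_or_ne A 0 with rfl | hA0
  · rw [zero_rpow_of_pos (one_div_pos.2 hpq.pos)]
    exact zero_le
  have hsplit : A ^ (1 / p) * A ^ (1 / q) = A := by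
    rw [← rpow_add _ _ hA0 hA, one_div, one_div, hpq.inv_add_inv_eq_one, rpow_one]
  have hq0 : 0 ≤ 1 / q := one_div_nonneg.2 hpq.symm.nonneg
  rwa [← ENNReal.mul_le_mul_iff_left (rpow_pos (pos_iff_ne_zero.2 hA0) hA).ne'
    (rpow_ne_top_of_nonneg hq0 hA), hsplit]

theorem rpow_eq_rpow_mul_rpow_sub (a : ℝ≥0∞) {u v : ℝ} (hu : 0 ≤ u) (huv : u ≤ v) :
    a ^ v = a ^ u * a ^ (v - u) := by
  rw [← rpow_add_of_nonneg _ _ hu (sub_nonneg.2 huv), add_sub_cancel]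

theorem lintegral_rpow_mul_rpow_mul_rpow_le {α : Type*} [MeasurableSpace α] {μ : Measure α}
    {a b c : α → ℝ≥0∞} (ha : AEMeasurable a μ) (hb : AEMeasurable b μ) (hc : AEMeasurable c μ)
    {x y z : ℝ} (hx : 0 ≤ x) (hy : 0 ≤ y) (hz : 0 ≤ z) (hxyz : x + y + z = 1) :
    ∫⁻ t, a t ^ x * b t ^ y * c t ^ z ∂μ ≤
      (∫⁻ t, a t ∂μ) ^ x * (∫⁻ t, b t ∂μ) ^ y * (∫⁻ t, c t ∂μ) ^ z := by
  have := lintegral_prod_norm_pow_le (μ := μ) Finset.univ (f := ![a, b, c]) (p := ![x, y, z])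
    (by simp [Fin.forall_fin_succ, ha, hb, hc]) (by simp [Fin.sum_univ_three, hxyz])
    (by simp [Fin.forall_fin_succ, hx, hy, hz])
  simpa [Fin.prod_univ_three, mul_assoc] using this

end ENNReal

section Minkowski

variable {α β : Type*} [MeasurableSpace α] [MeasurableSpace β] {μ : Measure α} {ν : Measure β}

theorem lintegral_le_of_forall_lintegral_ne_top_le [SigmaFinite μ] {φ : α → ℝ≥0∞} {C : ℝ≥0∞}
    (h : ∀ ψ : α → ℝ≥0∞, Measurable ψ → ψ ≤ φ → ∫⁻ x, ψ x ∂μ ≠ ∞ → ∫⁻ x, ψ x ∂μ ≤ C) :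
    ∫⁻ x, φ x ∂μ ≤ C := by
  refine le_of_forall_lt fun L hL => ?_
  simp only [lintegral_eq_nnreal φ, lt_iSup_iff] at hL
  obtain ⟨g₀, hg₀, hL⟩ := hL
  rw [← SimpleFunc.lintegral_eq_lintegral, SimpleFunc.coe_map] at hL
  obtain ⟨g, hg, hfin, hLg⟩ := SimpleFunc.exists_lt_lintegral_simpleFunc_of_lt_lintegral hL
  exact hLg.trans_le (h _ g.measurable.coe_nnreal_ennreal
    (fun x => (coe_le_coe.2 (hg x)).trans (hg₀ x)) hfin.ne)

theorem lintegral_le_rpow_of_le_rpow_lintegral [SFinite μ] [SFinite ν] {p : ℝ} (hp : 1 < p)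
    {F : α → β → ℝ≥0∞} (hF : Measurable (uncurry F)) {ψ : α → ℝ≥0∞} (hψ : Measurable ψ)
    (hψF : ψ ≤ fun x => (∫⁻ y, F x y ∂ν) ^ p) (hψ_fin : ∫⁻ x, ψ x ∂μ ≠ ∞) :
    ∫⁻ x, ψ x ∂μ ≤ (∫⁻ y, eLpNorm' (fun x => F x y) p μ ∂ν) ^ p := by
  set q := p.conjExponent
  have hpq : p.HolderConjugate q := .conjExponent hp
  have hp0 : 0 < p := hpq.pos
  have hq0 : 0 < q := hpq.symm.pos
  rw [← rpow_inv_le_iff hp0, ← one_div]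
  refine rpow_one_div_le_of_le_mul_rpow hpq hψ_fin ?_
  calc ∫⁻ x, ψ x ∂μ = ∫⁻ x, ψ x ^ (1 / p) * ψ x ^ (1 / q) ∂μ := by
        refine lintegral_congr fun x => ?_
        rw [← rpow_add_of_nonneg _ _ (by positivity) (by positivity), one_div, one_div,
          hpq.inv_add_inv_eq_one, rpow_one]
    _ ≤ ∫⁻ x, (∫⁻ y, F x y ∂ν) * ψ x ^ (1 / q) ∂μ := by
        gcongr with x
        rw [one_div, rpow_inv_le_iff hp0]
        exact hψF x
    _ = ∫⁻ y, ∫⁻ x, F x y * ψ x ^ (1 / q) ∂μ ∂ν := by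
        rw [← lintegral_lintegral_swap (hF.mul ((hψ.comp measurable_fst).pow_const _)).aemeasurable]
        exact lintegral_congr fun x => (lintegral_mul_const _ (hF.comp measurable_prodMk_left)).symm
    _ ≤ ∫⁻ y, eLpNorm' (fun x => F x y) p μ * (∫⁻ x, ψ x ∂μ) ^ (1 / q) ∂ν := by
        gcongr with y
        refine (lintegral_mul_le_Lp_mul_Lq μ hpq (hF.comp measurable_prodMk_right).aemeasurable
          (hψ.pow_const _).aemeasurable).trans_eq ?_
        simp_rw [← rpow_mul, one_div_mul_cancel hq0.ne', rpow_one, eLpNorm', enorm_eq_self,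
          comp_apply, uncurry_apply_pair]
    _ = (∫⁻ y, eLpNorm' (fun x => F x y) p μ ∂ν) * (∫⁻ x, ψ x ∂μ) ^ (1 / q) := by
        refine lintegral_mul_const _ ?_
        simp only [eLpNorm', enorm_eq_self]
        exact ((hF.pow_const p).lintegral_prod_left').pow_const _

theorem eLpNorm'_lintegral_le_lintegral_eLpNorm' [SigmaFinite μ] [SFinite ν] {p : ℝ} (hp : 1 ≤ p)
    {F : α → β → ℝ≥0∞} (hF : Measurable (uncurry F)) :
    eLpNorm' (fun x => ∫⁻ y, F x y ∂ν) p μ ≤ ∫⁻ y, eLpNorm' (fun x => F x y) p μ ∂ν := by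
  rcases hp.eq_or_lt with rfl | hp
  · simpa [eLpNorm'] using (lintegral_lintegral_swap hF.aemeasurable).le
  simp only [eLpNorm', enorm_eq_self]
  rw [one_div, rpow_inv_le_iff (by linarith)]
  exact lintegral_le_of_forall_lintegral_ne_top_le fun ψ hψ hψF hψ_fin => by
    simpa [eLpNorm'] using lintegral_le_rpow_of_le_rpow_lintegral hp hF hψ hψF hψ_fin

end Minkowski

theorem one_div_le_one_div_of_add_eq {p q r : ℝ} (hq : 1 ≤ q) (hpqr : 1 / p + 1 / q = 1 / r + 1) :
    1 / r ≤ 1 / p := by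
  have : 1 / q ≤ 1 := (div_le_one (by linarith)).2 hq
  linarith

section Young

variable {G : Type*} [MeasurableSpace G] [AddGroup G] [MeasurableAdd₂ G] [MeasurableNeg G]
  {μ : Measure G} [μ.IsAddLeftInvariant] {f g : G → ℝ≥0∞}

theorem lintegral_lconvolution [SFinite μ] (hf : Measurable f) (hg : Measurable g) :
    ∫⁻ x, (f ⋆ₗ[μ] g) x ∂μ = (∫⁻ x, f x ∂μ) * ∫⁻ x, g x ∂μ := by
  simp only [lconvolution_def]
  rw [lintegral_lintegral_swap (by fun_prop), ← lintegral_mul_const _ hf]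
  refine lintegral_congr fun y => ?_
  rw [lintegral_const_mul _ (by fun_prop), lintegral_add_left_eq_self g (-y)]

variable [μ.IsNegInvariant]

theorem lintegral_neg_add_eq_self (g : G → ℝ≥0∞) (x : G) :
    ∫⁻ y, g (-y + x) ∂μ = ∫⁻ y, g y ∂μ := by
  rw [← lintegral_add_left_eq_self _ x, ← lintegral_neg_eq_self g]
  simp [neg_add_rev, add_assoc]

theorem lconvolution_le {p q r : ℝ} (hp : 1 ≤ p) (hq : 1 ≤ q) (hr : 0 < r)
    (hpqr : 1 / p + 1 / q = 1 / r + 1) (hf : Measurable f) (hg : Measurable g) (x : G) :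
    (f ⋆ₗ[μ] g) x ≤ ((fun y => f y ^ p) ⋆ₗ[μ] fun y => g y ^ q) x ^ (1 / r)
      * (∫⁻ y, f y ^ p ∂μ) ^ (1 / p - 1 / r) * (∫⁻ y, g y ^ q ∂μ) ^ (1 / q - 1 / r) := by
  have hrp : 1 / r ≤ 1 / p := one_div_le_one_div_of_add_eq hq hpqr
  have hrq : 1 / r ≤ 1 / q := one_div_le_one_div_of_add_eq hp (by linarith)
  have hsplit (a : ℝ≥0∞) {s : ℝ} (hs : 1 ≤ s) (hsr : 1 / r ≤ 1 / s) :
      (a ^ s) ^ (1 / r) * (a ^ s) ^ (1 / s - 1 / r) = a := by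
    rw [← rpow_eq_rpow_mul_rpow_sub _ (by positivity) hsr, ← rpow_mul,
      mul_one_div_cancel (by linarith), rpow_one]
  calc (f ⋆ₗ[μ] g) x
      = ∫⁻ y, (f y ^ p * g (-y + x) ^ q) ^ (1 / r) * (f y ^ p) ^ (1 / p - 1 / r)
          * (g (-y + x) ^ q) ^ (1 / q - 1 / r) ∂μ := by
        refine lintegral_congr fun y => ?_
        rw [mul_rpow_of_nonneg _ _ (by positivity)]
        conv_lhs => rw [← hsplit (f y) hp hrp, ← hsplit (g (-y + x)) hq hrq]
        ring
    _ ≤ _ := by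
        refine (lintegral_rpow_mul_rpow_mul_rpow_le (by fun_prop) (by fun_prop) (by fun_prop)
          (by positivity) (by linarith) (by linarith) (by linarith)).trans_eq ?_
        rw [lintegral_neg_add_eq_self (fun y => g y ^ q)]
        rfl

theorem eLpNorm'_lconvolution_le [SFinite μ] {p q r : ℝ} (hp : 1 ≤ p) (hq : 1 ≤ q) (hr : 0 < r)
    (hpqr : 1 / p + 1 / q = 1 / r + 1) (hf : Measurable f) (hg : Measurable g) :
    eLpNorm' (f ⋆ₗ[μ] g) r μ ≤ eLpNorm' f p μ * eLpNorm' g q μ := by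
  set Fp := ∫⁻ y, f y ^ p ∂μ
  set Gq := ∫⁻ y, g y ^ q ∂μ
  set K := Fp ^ (1 / p - 1 / r) * Gq ^ (1 / q - 1 / r)
  have hrp : 1 / r ≤ 1 / p := one_div_le_one_div_of_add_eq hq hpqr
  have hrq : 1 / r ≤ 1 / q := one_div_le_one_div_of_add_eq hp (by linarith)
  simp only [eLpNorm', enorm_eq_self]
  calc (∫⁻ x, (f ⋆ₗ[μ] g) x ^ r ∂μ) ^ (1 / r)
      ≤ (∫⁻ x, (((fun y => f y ^ p) ⋆ₗ[μ] fun y => g y ^ q) x ^ (1 / r) * K) ^ r ∂μ) ^ (1 / r) := by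
        gcongr with x
        rw [← mul_assoc]
        exact lconvolution_le hp hq hr hpqr hf hg x
    _ = (∫⁻ x, ((fun y => f y ^ p) ⋆ₗ[μ] fun y => g y ^ q) x ∂μ) ^ (1 / r) * K := by
        simp_rw [mul_rpow_of_nonneg _ _ hr.le, ← rpow_mul, one_div_mul_cancel hr.ne', rpow_one]
        rw [lintegral_mul_const _ (by fun_prop), mul_rpow_of_nonneg _ _ (by positivity),
          ← rpow_mul, mul_one_div_cancel hr.ne', rpow_one]
    _ = Fp ^ (1 / p) * Gq ^ (1 / q) := by
        rw [lintegral_lconvolution (by fun_prop) (by fun_prop),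
          mul_rpow_of_nonneg _ _ (by positivity),
          rpow_eq_rpow_mul_rpow_sub Fp (u := 1 / r) (by positivity) hrp,
          rpow_eq_rpow_mul_rpow_sub Gq (u := 1 / r) (by positivity) hrq]
        ring

end Young

section MixedNorm

variable {α β : Type*} [MeasurableSpace α] [MeasurableSpace β]

theorem Measurable.eLpNorm'_prod_left {μ : Measure α} [SFinite μ] {F : α × β → ℝ≥0∞}
    (hF : Measurable F) (p : ℝ) : Measurable fun y => eLpNorm' (fun x => F (x, y)) p μ := by
  simp only [eLpNorm', enorm_eq_self]
  exact ((hF.pow_const p).lintegral_prod_left').pow_const _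

theorem eLpNorm'_eLpNorm'_eq_lintegral (μ : Measure α) (ν : Measure β) (F : α × β → ℝ≥0∞)
    (p q : ℝ) :
    eLpNorm' (fun y => eLpNorm' (fun x => F (x, y)) p μ) q ν
      = (∫⁻ y, (∫⁻ x, F (x, y) ^ p ∂μ) ^ (q / p) ∂ν) ^ (1 / q) := by
  simp only [eLpNorm', enorm_eq_self, ← rpow_mul, one_div_mul_eq_div]

variable {G₁ G₂ : Type*} [MeasurableSpace G₁] [AddGroup G₁] [MeasurableAdd₂ G₁] [MeasurableNeg G₁]
  [MeasurableSpace G₂] [AddGroup G₂] [MeasurableAdd₂ G₂] [MeasurableNeg G₂]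
  {μ₁ : Measure G₁} {μ₂ : Measure G₂} [SigmaFinite μ₁] [SFinite μ₂]
  {f g : G₁ × G₂ → ℝ≥0∞}

theorem lconvolution_prod_apply (hf : Measurable f) (hg : Measurable g) (x₁ : G₁) (x₂ : G₂) :
    (f ⋆ₗ[μ₁.prod μ₂] g) (x₁, x₂)
      = ∫⁻ t₂, ((fun t₁ => f (t₁, t₂)) ⋆ₗ[μ₁] fun t₁ => g (t₁, -t₂ + x₂)) x₁ ∂μ₂ := by
  have hsub : Measurable fun y : G₁ × G₂ => (-y.1 + x₁, -y.2 + x₂) := by fun_prop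
  have hmeas : Measurable fun y : G₁ × G₂ => f y * g (-y + (x₁, x₂)) := hf.mul (hg.comp hsub)
  exact lintegral_prod_symm _ hmeas.aemeasurable

variable [μ₁.IsAddLeftInvariant] [μ₁.IsNegInvariant] [μ₂.IsAddLeftInvariant] [μ₂.IsNegInvariant]

theorem eLpNorm'_eLpNorm'_lconvolution_le {p₁ p₂ q₁ q₂ r₁ r₂ : ℝ} (hp₁ : 1 ≤ p₁) (hp₂ : 1 ≤ p₂)
    (hq₁ : 1 ≤ q₁) (hq₂ : 1 ≤ q₂) (hr₁ : 1 ≤ r₁) (hr₂ : 0 < r₂)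
    (h₁ : 1 / p₁ + 1 / q₁ = 1 / r₁ + 1) (h₂ : 1 / p₂ + 1 / q₂ = 1 / r₂ + 1)
    (hf : Measurable f) (hg : Measurable g) :
    eLpNorm' (fun x₂ => eLpNorm' (fun x₁ => (f ⋆ₗ[μ₁.prod μ₂] g) (x₁, x₂)) r₁ μ₁) r₂ μ₂
      ≤ eLpNorm' (fun t₂ => eLpNorm' (fun t₁ => f (t₁, t₂)) p₁ μ₁) p₂ μ₂
        * eLpNorm' (fun t₂ => eLpNorm' (fun t₁ => g (t₁, t₂)) q₁ μ₁) q₂ μ₂ := by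
  set Φ := fun t₂ => eLpNorm' (fun t₁ => f (t₁, t₂)) p₁ μ₁
  set Ψ := fun t₂ => eLpNorm' (fun t₁ => g (t₁, t₂)) q₁ μ₁
  have hrow (x₂ : G₂) :
      eLpNorm' (fun x₁ => (f ⋆ₗ[μ₁.prod μ₂] g) (x₁, x₂)) r₁ μ₁ ≤ (Φ ⋆ₗ[μ₂] Ψ) x₂ := by
    simp_rw [lconvolution_prod_apply hf hg]
    refine (eLpNorm'_lintegral_le_lintegral_eLpNorm' hr₁ ?_).trans (lintegral_mono fun t₂ => ?_)
    · simp only [lconvolution_def]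
      exact Measurable.lintegral_prod_right' (f := fun z : (G₁ × G₂) × G₁ =>
        f (z.2, z.1.2) * g (-z.2 + z.1.1, -z.1.2 + x₂)) (by fun_prop)
    · exact eLpNorm'_lconvolution_le hp₁ hq₁ (by linarith) h₁ (by fun_prop) (by fun_prop)
  calc _ ≤ eLpNorm' (Φ ⋆ₗ[μ₂] Ψ) r₂ μ₂ := eLpNorm'_mono_enorm_ae hr₂.le (ae_of_all _ hrow)
    _ ≤ _ := eLpNorm'_lconvolution_le hp₂ hq₂ hr₂ h₂ (hf.eLpNorm'_prod_left p₁)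
        (hg.eLpNorm'_prod_left q₁)

end MixedNorm

/-- The two-variable mixed-norm Young inequality for convolution on `ℝ²`. -/
theorem mixed_norm_young_two_variables
    (p1 p2 q1 q2 r1 r2 : ℝ)
    (hp1 : 1 ≤ p1) (hp2 : 1 ≤ p2) (hq1 : 1 ≤ q1) (hq2 : 1 ≤ q2)
    (hr1 : 1 ≤ r1) (hr2 : 1 ≤ r2)
    (h1 : 1 / p1 + 1 / q1 = 1 / r1 + 1) (h2 : 1 / p2 + 1 / q2 = 1 / r2 + 1)
    (f g : ℝ × ℝ → ℝ≥0∞) (hf : Measurable f) (hg : Measurable g) :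
    (∫⁻ x2 : ℝ, (∫⁻ x1 : ℝ,
        (∫⁻ t : ℝ × ℝ, f ((x1, x2) - t) * g t) ^ r1) ^ (r2 / r1)) ^ (1 / r2)
      ≤ (∫⁻ t2 : ℝ, (∫⁻ t1 : ℝ, f (t1, t2) ^ p1) ^ (p2 / p1)) ^ (1 / p2)
        * (∫⁻ t2 : ℝ, (∫⁻ t1 : ℝ, g (t1, t2) ^ q1) ^ (q2 / q1)) ^ (1 / q2) := by
  have hconv (x : ℝ × ℝ) : ∫⁻ t, f (x - t) * g t = (g ⋆ₗ[volume.prod volume] f) x := by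
    simp_rw [lconvolution_def, ← Measure.volume_eq_prod, mul_comm (g _), sub_eq_neg_add]
  simp_rw [hconv]
  rw [← eLpNorm'_eLpNorm'_eq_lintegral, ← eLpNorm'_eLpNorm'_eq_lintegral,
    ← eLpNorm'_eLpNorm'_eq_lintegral, mul_comm]
  exact eLpNorm'_eLpNorm'_lconvolution_le hq1 hq2 hp1 hp2 hr1 (by linarith)
    (by linarith) (by linarith) hg hf
end
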